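/- arXiv:1807.11292 — 14 statements merged into one kernel-verified Lean document; each statement's English description precedes it below -/
import Mathlib

section
/- Let K ⊂ ℝⁿ be a non-empty closed convex set, let F : K → ℝⁿ be continuous and strongly pseudomonotone with modulus γ > 0, and let x* be the unique solution of the variational inequality VI(K, F). Then for every x ∈ ℝⁿ, ‖x* − pr_K(x)‖ ≤ (1/γ) ‖F_K^nor(x)‖, where F_K^nor(x) = F(pr_K(x)) + x − pr_K(x) is the normal map. -/
open scoped RealInnerProductSpace

/-- Error bound via the normal map for continuous strongly pseudomonotone VIs. -/
theorem error_bound_normal_map {n : ℕ} (K : Set (EuclideanSpace ℝ (Fin n)))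
    (hKne : K.Nonempty) (hKcl : IsClosed K) (hKcv : Convex ℝ K)
    (F : EuclideanSpace ℝ (Fin n) → EuclideanSpace ℝ (Fin n))
    (hFcont : ContinuousOn F K)
    (γ : ℝ) (hγ : 0 < γ)
    (hSPM : ∀ x ∈ K, ∀ y ∈ K, 0 ≤ ⟪F y, x - y⟫ → γ * ‖x - y‖ ^ 2 ≤ ⟪F x, x - y⟫)
    (proj : EuclideanSpace ℝ (Fin n) → EuclideanSpace ℝ (Fin n))
    (hproj_mem : ∀ z, proj z ∈ K)
    (hproj_char : ∀ z, ∀ y ∈ K, ⟪z - proj z, y - proj z⟫ ≤ 0)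
    (xs : EuclideanSpace ℝ (Fin n)) (hxs_mem : xs ∈ K)
    (hxs_sol : ∀ y ∈ K, 0 ≤ ⟪F xs, y - xs⟫)
    (hxs_uniq : ∀ z ∈ K, (∀ y ∈ K, 0 ≤ ⟪F z, y - z⟫) → z = xs)
    (x : EuclideanSpace ℝ (Fin n)) :
    ‖xs - proj x‖ ≤ (1 / γ) * ‖F (proj x) + x - proj x‖ := by
  set p := proj x with hp
  set r := F p + x - p with hr
  have hpK : p ∈ K := hproj_mem x
  have h1 : 0 ≤ ⟪F xs, p - xs⟫ := hxs_sol p hpK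
  have h2 : γ * ‖p - xs‖ ^ 2 ≤ ⟪F p, p - xs⟫ := hSPM p hpK xs hxs_mem h1
  have hchar : ⟪x - p, xs - p⟫ ≤ 0 := hproj_char x xs hxs_mem
  have hFp : F p = r - (x - p) := by rw [hr]; abel
  have h3 : ⟪F p, p - xs⟫ ≤ ⟪r, p - xs⟫ := by
    rw [hFp, inner_sub_left]
    have : ⟪x - p, p - xs⟫ = -⟪x - p, xs - p⟫ := by
      rw [← inner_neg_right]; congr 1; abel
    linarith [this ▸ (neg_nonneg.mpr hchar)]
  have h4 : ⟪r, p - xs⟫ ≤ ‖r‖ * ‖p - xs‖ := real_inner_le_norm r (p - xs)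
  have key : γ * ‖p - xs‖ ^ 2 ≤ ‖r‖ * ‖p - xs‖ := by linarith
  have hnorm : ‖xs - p‖ = ‖p - xs‖ := norm_sub_rev _ _
  rw [hnorm]
  rcases eq_or_lt_of_le (norm_nonneg (p - xs)) with h0 | h0
  · rw [← h0]
    positivity
  · rw [div_mul_eq_mul_div, le_div_iff₀ hγ]
    nlinarith [key]
end

section
/- Let K ⊂ ℝⁿ be a non-empty closed convex set, let F : K → ℝⁿ be continuous and strongly pseudomonotone with modulus γ > 0, and let x* be the unique solution of VI(K, F). Then for every x ∈ K, ‖x* − x‖ ≤ (1/γ) ‖F(x)‖. -/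
open scoped RealInnerProductSpace

/-- Error bound `‖x* − x‖ ≤ (1/γ)‖F(x)‖` for points of `K`. -/
theorem error_bound_on_K {n : ℕ} (K : Set (EuclideanSpace ℝ (Fin n)))
    (hKne : K.Nonempty) (hKcl : IsClosed K) (hKcv : Convex ℝ K)
    (F : EuclideanSpace ℝ (Fin n) → EuclideanSpace ℝ (Fin n))
    (hFcont : ContinuousOn F K)
    (γ : ℝ) (hγ : 0 < γ)
    (hSPM : ∀ x ∈ K, ∀ y ∈ K, 0 ≤ ⟪F y, x - y⟫ → γ * ‖x - y‖ ^ 2 ≤ ⟪F x, x - y⟫)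
    (xs : EuclideanSpace ℝ (Fin n)) (hxs_mem : xs ∈ K)
    (hxs_sol : ∀ y ∈ K, 0 ≤ ⟪F xs, y - xs⟫)
    (hxs_uniq : ∀ z ∈ K, (∀ y ∈ K, 0 ≤ ⟪F z, y - z⟫) → z = xs)
    (x : EuclideanSpace ℝ (Fin n)) (hx : x ∈ K) :
    ‖xs - x‖ ≤ (1 / γ) * ‖F x‖ := by
  have h1 : γ * ‖x - xs‖ ^ 2 ≤ ⟪F x, x - xs⟫ :=
    hSPM x hx xs hxs_mem (hxs_sol x hx)
  have h2 : ⟪F x, x - xs⟫ ≤ ‖F x‖ * ‖x - xs‖ := real_inner_le_norm _ _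
  have hns : ‖xs - x‖ = ‖x - xs‖ := by rw [norm_sub_rev]
  rw [hns, div_mul_eq_mul_div, le_div_iff₀ hγ]
  rcases eq_or_lt_of_le (norm_nonneg (x - xs)) with h0 | h0
  · rw [← h0]; simp [norm_nonneg]
  · nlinarith [h1.trans h2]
end

section
/- Let K ⊂ ℝⁿ be a non-empty closed bounded convex set, let F : K → ℝⁿ be continuous and strongly pseudomonotone, and let {λ_k} be a sequence of positive reals with ∑_{k=1}^∞ λ_k = ∞ and lim_{k→∞} λ_k = 0. Then for any starting point x_1 ∈ K, the sequence defined by x_{k+1} = pr_K(x_k − λ_k F(x_k)) converges to the unique solution x* of VI(K, F). -/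
open scoped RealInnerProductSpace

/-- Convergence of the gradient projection method with non-summable diminishing
stepsizes for continuous strongly pseudomonotone VIs on a bounded set. -/
theorem gpm_convergence {n : ℕ} (K : Set (EuclideanSpace ℝ (Fin n)))
    (hKne : K.Nonempty) (hKcl : IsClosed K) (hKbd : Bornology.IsBounded K)
    (hKcv : Convex ℝ K)
    (F : EuclideanSpace ℝ (Fin n) → EuclideanSpace ℝ (Fin n))
    (hFcont : ContinuousOn F K)
    (γ : ℝ) (hγ : 0 < γ)
    (hSPM : ∀ x ∈ K, ∀ y ∈ K, 0 ≤ ⟪F y, x - y⟫ → γ * ‖x - y‖ ^ 2 ≤ ⟪F x, x - y⟫)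
    (lam : ℕ → ℝ)
    (hlam_pos : ∀ k ≥ 1, 0 < lam k)
    (hlam_div : ¬ Summable lam)
    (hlam_lim : Filter.Tendsto lam Filter.atTop (nhds 0))
    (proj : EuclideanSpace ℝ (Fin n) → EuclideanSpace ℝ (Fin n))
    (hproj_mem : ∀ z, proj z ∈ K)
    (hproj_char : ∀ z, ∀ y ∈ K, ⟪z - proj z, y - proj z⟫ ≤ 0)
    (xs : EuclideanSpace ℝ (Fin n)) (hxs_mem : xs ∈ K)
    (hxs_sol : ∀ y ∈ K, 0 ≤ ⟪F xs, y - xs⟫)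
    (hxs_uniq : ∀ z ∈ K, (∀ y ∈ K, 0 ≤ ⟪F z, y - z⟫) → z = xs)
    (x : ℕ → EuclideanSpace ℝ (Fin n))
    (hx1 : x 1 ∈ K)
    (hrec : ∀ k ≥ 1, x (k + 1) = proj (x k - lam k • F (x k))) :
    Filter.Tendsto x Filter.atTop (nhds xs) := by
  -- membership of iterates
  have hxK : ∀ k, 1 ≤ k → x k ∈ K := by
    intro k hk
    induction k, hk using Nat.le_induction with
    | base => exact hx1
    | succ k hk ih => rw [hrec k hk]; exact hproj_mem _
  -- bound on F over K
  have hKcp : IsCompact K := Metric.isCompact_of_isClosed_isBounded hKcl hKbd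
  obtain ⟨C, hC⟩ := hKcp.exists_bound_of_continuousOn hFcont
  set M := max C 1 with hM
  have hM1 : 0 < M := lt_of_lt_of_le one_pos (le_max_right _ _)
  have hMb : ∀ y ∈ K, ‖F y‖ ≤ M := fun y hy => (hC y hy).trans (le_max_left _ _)
  set a : ℕ → ℝ := fun k => ‖x k - xs‖ ^ 2 with ha_def
  have ha_nonneg : ∀ k, 0 ≤ a k := fun k => sq_nonneg _
  -- key one-step inequality
  have key : ∀ k, 1 ≤ k →
      a (k + 1) ≤ a k - 2 * γ * lam k * a k + lam k ^ 2 * M ^ 2 := by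
    intro k hk
    have hxkK := hxK k hk
    set z := x k - lam k • F (x k) with hz
    have hp : x (k + 1) = proj z := hrec k hk
    have hchar : ⟪z - proj z, xs - proj z⟫ ≤ 0 := hproj_char z xs hxs_mem
    have h1 : ‖proj z - xs‖ ^ 2 ≤ ‖z - xs‖ ^ 2 := by
      have e1 : z - xs = (z - proj z) + (proj z - xs) := by abel
      have e2 : ‖z - xs‖ ^ 2
          = ‖z - proj z‖ ^ 2 + 2 * ⟪z - proj z, proj z - xs⟫ + ‖proj z - xs‖ ^ 2 := by
        rw [e1, norm_add_sq_real]
      have e3 : ⟪z - proj z, proj z - xs⟫ = -⟪z - proj z, xs - proj z⟫ := by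
        rw [show proj z - xs = -(xs - proj z) by abel, inner_neg_right]
      nlinarith [sq_nonneg ‖z - proj z‖]
    have e4 : ‖z - xs‖ ^ 2
        = ‖x k - xs‖ ^ 2 - 2 * lam k * ⟪F (x k), x k - xs⟫ + lam k ^ 2 * ‖F (x k)‖ ^ 2 := by
      have e5 : z - xs = (x k - xs) - lam k • F (x k) := by rw [hz]; abel
      rw [e5, norm_sub_sq_real, real_inner_smul_right, norm_smul, Real.norm_eq_abs,
        mul_pow, sq_abs, real_inner_comm]
      ring
    have hspm : γ * ‖x k - xs‖ ^ 2 ≤ ⟪F (x k), x k - xs⟫ :=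
      hSPM (x k) hxkK xs hxs_mem (hxs_sol (x k) hxkK)
    have hFb : ‖F (x k)‖ ≤ M := hMb _ hxkK
    have hl : 0 < lam k := hlam_pos k hk
    have hgoal : a (k + 1) = ‖proj z - xs‖ ^ 2 := by rw [ha_def]; simp [hp]
    have hak : a k = ‖x k - xs‖ ^ 2 := rfl
    rw [hgoal, hak]
    nlinarith [mul_le_mul hFb hFb (norm_nonneg _) hM1.le, sq_nonneg (lam k),
      mul_le_mul_of_nonneg_left hspm hl.le, sq_nonneg ‖x k - xs‖]
  -- the squared distances tend to 0
  have ha_lim : Filter.Tendsto a Filter.atTop (nhds 0) := by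
    rw [Metric.tendsto_atTop]
    intro ε hε
    set ε' := ε / 2 with hε'
    have hε'pos : 0 < ε' := by positivity
    have hδpos : 0 < min (γ * ε' / M ^ 2) (1 / (2 * γ)) := by positivity
    obtain ⟨k0', hk0'⟩ := (Metric.tendsto_atTop.1 hlam_lim) _ hδpos
    set k0 := max k0' 1 with hk0def
    have hk0ge1 : 1 ≤ k0 := le_max_right _ _
    have hlam_small : ∀ k, k0 ≤ k → lam k < min (γ * ε' / M ^ 2) (1 / (2 * γ)) := by
      intro k hk
      have h := hk0' k (le_trans (le_max_left _ _) hk)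
      rwa [Real.dist_eq, sub_zero, abs_of_pos (hlam_pos k (le_trans hk0ge1 hk))] at h
    have hlam1 : ∀ k, k0 ≤ k → lam k * M ^ 2 ≤ γ * ε' := by
      intro k hk
      have h := (hlam_small k hk).trans_le (min_le_left _ _)
      have hM2 : (0 : ℝ) < M ^ 2 := by positivity
      rw [div_eq_mul_inv] at h
      calc lam k * M ^ 2 ≤ (γ * ε' * (M ^ 2)⁻¹) * M ^ 2 := by nlinarith
        _ = γ * ε' := by field_simp
    have hlam2 : ∀ k, k0 ≤ k → 2 * γ * lam k ≤ 1 := by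
      intro k hk
      have h := (hlam_small k hk).trans_le (min_le_right _ _)
      rw [lt_div_iff₀ (by positivity)] at h
      nlinarith
    -- Step A: eventually a k drops below ε'
    have hA : ∃ k1, k0 ≤ k1 ∧ a k1 ≤ ε' := by
      by_contra hcon
      push_neg at hcon
      have hdec : ∀ m, a (k0 + m) ≤ a k0 - γ * ε' * (∑ j ∈ Finset.range m, lam (k0 + j)) := by
        intro m
        induction m with
        | zero => simp
        | succ m ih =>
          have hk : 1 ≤ k0 + m := le_trans hk0ge1 (Nat.le_add_right _ _)
          have hk0le : k0 ≤ k0 + m := Nat.le_add_right _ _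
          have hkey := key (k0 + m) hk
          have hgt := hcon _ hk0le
          have h1 := hlam1 _ hk0le
          have hl := hlam_pos _ hk
          have hstep : a (k0 + m + 1) ≤ a (k0 + m) - γ * ε' * lam (k0 + m) := by
            nlinarith [mul_le_mul_of_nonneg_left h1 hl.le,
              mul_le_mul_of_nonneg_left hgt.le (by positivity : (0:ℝ) ≤ 2 * γ * lam (k0 + m))]
          rw [Finset.sum_range_succ]
          have heq : k0 + (m + 1) = k0 + m + 1 := by ring
          rw [heq]
          linarith
      have hns : ¬ Summable (fun j => lam (k0 + j)) := by
        intro hs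
        have hs' : Summable (fun n => lam (n + k0)) := by
          apply hs.congr
          intro j; rw [Nat.add_comm]
        exact hlam_div ((summable_nat_add_iff k0).1 hs')
      have hpos' : ∀ j, 0 ≤ lam (k0 + j) :=
        fun j => (hlam_pos _ (le_trans hk0ge1 (Nat.le_add_right _ _))).le
      have hdiv := (not_summable_iff_tendsto_nat_atTop_of_nonneg hpos').1 hns
      obtain ⟨m, hm⟩ := (hdiv.eventually_ge_atTop ((a k0) / (γ * ε') + 1)).exists
      have hge : 0 < γ * ε' := by positivity
      have hmul : a k0 + γ * ε' ≤ γ * ε' * (∑ j ∈ Finset.range m, lam (k0 + j)) := by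
        have := mul_le_mul_of_nonneg_left hm hge.le
        have hc : γ * ε' * ((a k0) / (γ * ε') + 1) = a k0 + γ * ε' := by field_simp
        linarith [hc ▸ this]
      have := hdec m
      have := ha_nonneg (k0 + m)
      linarith
    obtain ⟨k1, hk1ge, hk1⟩ := hA
    -- Step B: a k stays below ε' forever
    have hB : ∀ k, k1 ≤ k → a k ≤ ε' := by
      intro k hk
      induction k, hk using Nat.le_induction with
      | base => exact hk1
      | succ k hk ih =>
        have hk0le : k0 ≤ k := le_trans hk1ge hk
        have hkey := key k (le_trans hk0ge1 hk0le)
        have h1 := hlam1 k hk0le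
        have h2 := hlam2 k hk0le
        have hl := hlam_pos k (le_trans hk0ge1 hk0le)
        nlinarith [mul_le_mul_of_nonneg_left h1 hl.le,
          mul_nonneg (sub_nonneg.2 ih) (show (0:ℝ) ≤ 1 - 2 * γ * lam k by linarith),
          mul_pos (mul_pos hγ hl) hε'pos]
    refine ⟨k1, fun k hk => ?_⟩
    have h := hB k hk
    rw [Real.dist_eq, sub_zero, abs_of_nonneg (ha_nonneg k)]
    linarith
  -- conclude
  have hsq : Filter.Tendsto (fun k => Real.sqrt (a k)) Filter.atTop (nhds 0) := by
    have := (Real.continuous_sqrt.tendsto 0).comp ha_lim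
    rw [Real.sqrt_zero] at this
    exact this
  have heq : (fun k => ‖x k - xs‖) = fun k => Real.sqrt (a k) := by
    funext k
    rw [ha_def]
    exact (Real.sqrt_sq (norm_nonneg _)).symm
  exact tendsto_iff_norm_sub_tendsto_zero.2 (heq ▸ hsq)
end

section
/- Let K ⊂ ℝⁿ be a non-empty closed convex set, let F : K → ℝⁿ be strongly pseudomonotone with modulus γ > 0, let x* ∈ K be a solution of VI(K, F), let λ > 0, and let x ∈ K with x⁺ := pr_K(x − λ F(x)). Then ‖x* − x⁺‖² ≤ (1 − 2λγ) ‖x* − x‖² + λ² ‖F(x)‖². -/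
open scoped RealInnerProductSpace

/-- One-step estimate for the gradient projection iteration under strong
pseudomonotonicity: `‖x* − x⁺‖² ≤ (1 − 2λγ)‖x* − x‖² + λ²‖F(x)‖²`. -/
theorem gpm_one_step_estimate {n : ℕ} (K : Set (EuclideanSpace ℝ (Fin n)))
    (hKne : K.Nonempty) (hKcl : IsClosed K) (hKcv : Convex ℝ K)
    (F : EuclideanSpace ℝ (Fin n) → EuclideanSpace ℝ (Fin n))
    (γ : ℝ) (hγ : 0 < γ)
    (hSPM : ∀ x ∈ K, ∀ y ∈ K, 0 ≤ ⟪F y, x - y⟫ → γ * ‖x - y‖ ^ 2 ≤ ⟪F x, x - y⟫)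
    (xs : EuclideanSpace ℝ (Fin n)) (hxs_mem : xs ∈ K)
    (hxs_sol : ∀ y ∈ K, 0 ≤ ⟪F xs, y - xs⟫)
    (lam : ℝ) (hlam : 0 < lam)
    (proj : EuclideanSpace ℝ (Fin n) → EuclideanSpace ℝ (Fin n))
    (hproj_mem : ∀ z, proj z ∈ K)
    (hproj_char : ∀ z, ∀ y ∈ K, ⟪z - proj z, y - proj z⟫ ≤ 0)
    (x : EuclideanSpace ℝ (Fin n)) (hx : x ∈ K)
    (xplus : EuclideanSpace ℝ (Fin n)) (hxplus : xplus = proj (x - lam • F x)) :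
    ‖xs - xplus‖ ^ 2 ≤ (1 - 2 * lam * γ) * ‖xs - x‖ ^ 2 + lam ^ 2 * ‖F x‖ ^ 2 := by
  subst hxplus
  set z := x - lam • F x with hz
  set p := proj z with hp
  have hc : ⟪z - p, xs - p⟫ ≤ 0 := hproj_char z xs hxs_mem
  have hspm : γ * ‖x - xs‖ ^ 2 ≤ ⟪F x, x - xs⟫ := hSPM x hx xs hxs_mem (hxs_sol x hx)
  have h1 : ‖xs - p‖ ^ 2 ≤ ‖xs - z‖ ^ 2 := by
    have hdecomp : xs - z = (xs - p) + (p - z) := by abel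
    have hexp : ‖xs - z‖ ^ 2 = ‖xs - p‖ ^ 2 + 2 * ⟪xs - p, p - z⟫ + ‖p - z‖ ^ 2 := by
      rw [hdecomp, norm_add_sq_real]
    have hip : 0 ≤ ⟪xs - p, p - z⟫ := by
      have h' : ⟪xs - p, p - z⟫ = -⟪z - p, xs - p⟫ := by
        rw [real_inner_comm, show (p - z) = -(z - p) by abel, inner_neg_left]
      rw [h']; linarith
    nlinarith [sq_nonneg ‖p - z‖]
  have h2 : ‖xs - z‖ ^ 2 = ‖xs - x‖ ^ 2 + 2 * lam * ⟪xs - x, F x⟫ + lam ^ 2 * ‖F x‖ ^ 2 := by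
    have hd : xs - z = (xs - x) + lam • F x := by rw [hz]; abel
    rw [hd, norm_add_sq_real, real_inner_smul_right, norm_smul]
    rw [Real.norm_eq_abs, abs_of_pos hlam]
    ring
  have h3 : ⟪xs - x, F x⟫ ≤ -γ * ‖xs - x‖ ^ 2 := by
    have h' : ⟪F x, x - xs⟫ = -⟪xs - x, F x⟫ := by
      rw [real_inner_comm, show x - xs = -(xs - x) by abel, inner_neg_left]
    have hn : ‖x - xs‖ = ‖xs - x‖ := norm_sub_rev _ _
    rw [h', hn] at hspm
    linarith
  nlinarith [h1, h2, h3, mul_pos hlam hγ]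
end

section
/- Let K ⊂ ℝⁿ be a non-empty closed bounded convex set, let F : K → ℝⁿ be continuous and strongly pseudomonotone with modulus 1/2, and let x* be the unique solution of VI(K, F). For any x_1 ∈ K, define x_{k+1} = pr_K(x_k − (1/k) F(x_k)) for k ≥ 1. Then ‖x* − x_k‖ converges to 0 with rate O(√((ln k)/k)), i.e., there exist C > 0 and N such that ‖x* − x_k‖ ≤ C √((ln k)/k) for all k ≥ N. -/
open scoped RealInnerProductSpace

/-- One step of the gradient projection method: the key recurrence inequality. -/
lemma gpm_step_aux {n : ℕ} (K : Set (EuclideanSpace ℝ (Fin n)))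
    (F : EuclideanSpace ℝ (Fin n) → EuclideanSpace ℝ (Fin n))
    (hSPM : ∀ x ∈ K, ∀ y ∈ K, 0 ≤ ⟪F y, x - y⟫ → (1 / 2) * ‖x - y‖ ^ 2 ≤ ⟪F x, x - y⟫)
    (proj : EuclideanSpace ℝ (Fin n) → EuclideanSpace ℝ (Fin n))
    (hproj_char : ∀ z, ∀ y ∈ K, ⟪z - proj z, y - proj z⟫ ≤ 0)
    (xs : EuclideanSpace ℝ (Fin n)) (hxs_mem : xs ∈ K)
    (hxs_sol : ∀ y ∈ K, 0 ≤ ⟪F xs, y - xs⟫)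
    (M : ℝ) (hM : 0 ≤ M) (hMb : ∀ y ∈ K, ‖F y‖ ≤ M)
    (k : ℕ) (hk : 1 ≤ k) (u v : EuclideanSpace ℝ (Fin n)) (hu : u ∈ K)
    (hv : v = proj (u - (1/(k:ℝ)) • F u)) :
    ‖v - xs‖^2 ≤ (1 - 1/(k:ℝ)) * ‖u - xs‖^2 + M^2 / (k:ℝ)^2 := by
  set lam : ℝ := 1/(k:ℝ) with hlam
  set g := F u with hg
  have hk0 : (0:ℝ) < k := by exact_mod_cast hk
  have hlam0 : 0 < lam := by positivity
  -- projection characterization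
  have hchar := hproj_char (u - lam • g) xs hxs_mem
  rw [← hv] at hchar
  have h1 : ⟪u - v, xs - v⟫ ≤ lam * ⟪g, xs - v⟫ := by
    have : u - lam • g - v = (u - v) - lam • g := by abel
    rw [this, inner_sub_left, real_inner_smul_left] at hchar
    linarith
  -- identity
  have hid : ‖v - xs‖^2 = ‖u - xs‖^2 - ‖u - v‖^2 + 2 * ⟪u - v, xs - v⟫ := by
    simp only [← real_inner_self_eq_norm_sq, inner_sub_left, inner_sub_right,
      real_inner_comm xs u, real_inner_comm xs v, real_inner_comm v u]
    ring
  -- strong pseudomonotonicity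
  have hspm : (1/2) * ‖u - xs‖^2 ≤ ⟪g, u - xs⟫ := hSPM u hu xs hxs_mem (hxs_sol u hu)
  have hsplit : ⟪g, xs - v⟫ = -⟪g, u - xs⟫ + ⟪g, u - v⟫ := by
    have h : xs - v = -(u - xs) + (u - v) := by abel
    rw [h, inner_add_right, inner_neg_right]
  -- Cauchy-Schwarz
  have hcs : ⟪g, u - v⟫ ≤ ‖g‖ * ‖u - v‖ := real_inner_le_norm _ _
  have hgM : ‖g‖ ≤ M := hMb u hu
  have hquad : 2 * lam * (‖g‖ * ‖u - v‖) ≤ lam^2 * M^2 + ‖u - v‖^2 := by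
    nlinarith [sq_nonneg (lam * ‖g‖ - ‖u - v‖), norm_nonneg g, norm_nonneg (u - v),
      mul_le_mul_of_nonneg_left hgM hlam0.le, sq_nonneg (lam*M - ‖u-v‖),
      mul_le_mul hgM hgM (norm_nonneg g) hM]
  have hmain : ‖v - xs‖^2 ≤ ‖u - xs‖^2 - ‖u - v‖^2 + 2 * lam * ⟪g, xs - v⟫ := by
    rw [hid]; nlinarith
  rw [hsplit] at hmain
  have hfin : M^2 / (k:ℝ)^2 = lam^2 * M^2 := by
    rw [hlam]; field_simp
  rw [hfin]
  nlinarith [mul_le_mul_of_nonneg_left hspm hlam0.le,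
    mul_le_mul_of_nonneg_left hcs (by positivity : (0:ℝ) ≤ 2*lam)]

/-- Rate of convergence `O(√(ln k / k))` of the gradient projection method with
stepsizes `λ_k = 1/k` for strongly pseudomonotone VIs with modulus `1/2`. -/
theorem gpm_rate_p_eq_one {n : ℕ} (K : Set (EuclideanSpace ℝ (Fin n)))
    (hKne : K.Nonempty) (hKcl : IsClosed K) (hKbd : Bornology.IsBounded K)
    (hKcv : Convex ℝ K)
    (F : EuclideanSpace ℝ (Fin n) → EuclideanSpace ℝ (Fin n))
    (hFcont : ContinuousOn F K)
    (hSPM : ∀ x ∈ K, ∀ y ∈ K, 0 ≤ ⟪F y, x - y⟫ → (1 / 2) * ‖x - y‖ ^ 2 ≤ ⟪F x, x - y⟫)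
    (proj : EuclideanSpace ℝ (Fin n) → EuclideanSpace ℝ (Fin n))
    (hproj_mem : ∀ z, proj z ∈ K)
    (hproj_char : ∀ z, ∀ y ∈ K, ⟪z - proj z, y - proj z⟫ ≤ 0)
    (xs : EuclideanSpace ℝ (Fin n)) (hxs_mem : xs ∈ K)
    (hxs_sol : ∀ y ∈ K, 0 ≤ ⟪F xs, y - xs⟫)
    (hxs_uniq : ∀ z ∈ K, (∀ y ∈ K, 0 ≤ ⟪F z, y - z⟫) → z = xs)
    (x : ℕ → EuclideanSpace ℝ (Fin n))
    (hx1 : x 1 ∈ K)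
    (hrec : ∀ k ≥ 1, x (k + 1) = proj (x k - (1 / (k : ℝ)) • F (x k))) :
    ∃ C > 0, ∃ N : ℕ, ∀ k ≥ N, ‖xs - x k‖ ≤ C * Real.sqrt (Real.log k / k) := by
  -- a uniform bound on ‖F‖ over the compact set K
  have hKcp : IsCompact K := Metric.isCompact_of_isClosed_isBounded hKcl hKbd
  obtain ⟨M0, hM0⟩ := hKcp.exists_bound_of_continuousOn hFcont
  set M : ℝ := max M0 0 with hMdef
  have hM : 0 ≤ M := le_max_right _ _
  have hMb : ∀ y ∈ K, ‖F y‖ ≤ M := fun y hy => (hM0 y hy).trans (le_max_left _ _)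
  -- membership of the iterates
  have hmem : ∀ k : ℕ, 1 ≤ k → x k ∈ K := by
    intro k hk
    induction k with
    | zero => omega
    | succ m ih =>
      cases Nat.eq_zero_or_pos m with
      | inl h => subst h; exact hx1
      | inr h => rw [hrec m h]; exact hproj_mem _
  set a : ℕ → ℝ := fun k => ‖x k - xs‖^2 with hadef
  have ha_nonneg : ∀ k, 0 ≤ a k := fun k => sq_nonneg _
  -- key recurrence
  have hkey : ∀ k : ℕ, 1 ≤ k → a (k+1) ≤ (1 - 1/(k:ℝ)) * a k + M^2 / (k:ℝ)^2 := by
    intro k hk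
    exact gpm_step_aux K F hSPM proj hproj_char xs hxs_mem hxs_sol M hM hMb k hk
      (x k) (x (k+1)) (hmem k hk) (hrec k hk)
  -- the harmonic-logarithmic estimate
  have hlog : ∀ k : ℕ, 1 ≤ k → 1/((k:ℝ)+1) ≤ Real.log (k+1) - Real.log k := by
    intro k hk
    have hk0 : (0:ℝ) < k := by exact_mod_cast hk
    have h1 : (0:ℝ) < (k:ℝ)/((k:ℝ)+1) := by positivity
    have h2 := Real.log_le_sub_one_of_pos h1
    rw [Real.log_div (by positivity) (by positivity)] at h2
    have hne : (k:ℝ)+1 ≠ 0 := by positivity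
    rw [div_sub_one hne] at h2
    have : ((k:ℝ) - ((k:ℝ)+1))/((k:ℝ)+1) = -(1/((k:ℝ)+1)) := by field_simp; ring
    rw [this] at h2
    linarith
  -- main induction
  have hind : ∀ k : ℕ, 1 ≤ k → (k:ℝ) * a (k+1) ≤ M^2 * (1 + Real.log k) := by
    intro k hk
    induction k, hk using Nat.le_induction with
    | base =>
      have h := hkey 1 le_rfl
      simp only [Nat.cast_one] at h ⊢
      simp only [Real.log_one]
      nlinarith [ha_nonneg 1]
    | succ m hm ih =>
      have h := hkey (m+1) (by omega)
      have hm0 : (0:ℝ) < m := by exact_mod_cast hm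
      have hm1 : (0:ℝ) < (m:ℝ)+1 := by linarith
      have hl := hlog m hm
      have hM2 : 0 ≤ M^2 := sq_nonneg _
      push_cast at h ⊢
      have hmul := mul_le_mul_of_nonneg_left h hm1.le
      have hexp : ((m:ℝ)+1) * ((1 - 1/((m:ℝ)+1)) * a (m+1) + M^2/((m:ℝ)+1)^2)
          = (m:ℝ) * a (m+1) + M^2/((m:ℝ)+1) := by
        field_simp
        ring
      rw [hexp] at hmul
      have hM2l : M^2 / ((m:ℝ)+1) ≤ M^2 * (Real.log ((m:ℝ)+1) - Real.log m) := by
        rw [div_eq_mul_one_div]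
        exact mul_le_mul_of_nonneg_left hl hM2
      nlinarith [hmul, ih, hM2l]
  -- conclusion
  refine ⟨2*M + 1, by linarith, 3, ?_⟩
  intro k hk
  obtain ⟨m, rfl⟩ : ∃ m, k = m + 1 := ⟨k - 1, by omega⟩
  have hm2 : 2 ≤ m := by omega
  have hm0 : (0:ℝ) < m := by exact_mod_cast Nat.lt_of_lt_of_le Nat.zero_lt_two hm2
  have hk0 : (0:ℝ) < (m:ℝ)+1 := by linarith
  have hind' := hind m (by omega)
  have hM2 : (0:ℝ) ≤ M^2 := sq_nonneg _
  have hlog1 : 1 ≤ Real.log ((m:ℝ)+1) := by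
    rw [Real.le_log_iff_exp_le hk0]
    calc Real.exp 1 ≤ 2.7182818286 := Real.exp_one_lt_d9.le
      _ ≤ 3 := by norm_num
      _ ≤ (m:ℝ)+1 := by
        have : (3:ℝ) ≤ (m:ℝ)+1 := by exact_mod_cast Nat.succ_le_succ hm2
        linarith
  have hlogm : Real.log m ≤ Real.log ((m:ℝ)+1) := by
    apply Real.log_le_log hm0
    linarith
  have hk2m : (m:ℝ)+1 ≤ 2*(m:ℝ) := by
    have : (2:ℝ) ≤ (m:ℝ) := by exact_mod_cast hm2
    linarith
  have key : a (m+1) ≤ (2*M+1)^2 * (Real.log ((m:ℝ)+1) / ((m:ℝ)+1)) := by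
    rw [mul_div_assoc', le_div_iff₀ hk0]
    nlinarith [mul_le_mul_of_nonneg_left hk2m (ha_nonneg (m+1)), hind',
      mul_le_mul_of_nonneg_left hlogm hM2, mul_le_mul_of_nonneg_left hlog1 hM2,
      mul_nonneg (by nlinarith : (0:ℝ) ≤ 4*M+1) (le_trans zero_le_one hlog1), hM,
      ha_nonneg (m+1)]
  rw [norm_sub_rev]
  have hnorm : ‖x (m+1) - xs‖ = Real.sqrt (a (m+1)) := (Real.sqrt_sq (norm_nonneg _)).symm
  have hcast : ((m+1:ℕ):ℝ) = (m:ℝ)+1 := by push_cast; ring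
  rw [hnorm, hcast]
  calc Real.sqrt (a (m+1))
      ≤ Real.sqrt ((2*M+1)^2 * (Real.log ((m:ℝ)+1) / ((m:ℝ)+1))) := Real.sqrt_le_sqrt key
    _ = (2*M+1) * Real.sqrt (Real.log ((m:ℝ)+1) / ((m:ℝ)+1)) := by
        rw [Real.sqrt_mul (sq_nonneg _), Real.sqrt_sq (by linarith)]
end

section
/- Let K ⊂ ℝⁿ be a non-empty closed bounded convex set, let F : K → ℝⁿ be continuous and strongly pseudomonotone with modulus 1/2, let p ∈ (1/2, 1), and let x* be the unique solution of VI(K, F). For any x_1 ∈ K, define x_{k+1} = pr_K(x_k − (1/k^p) F(x_k)) for k ≥ 1. Then ‖x* − x_k‖ converges to 0 with rate O(k^{1/2 − p}), i.e., there exist C > 0 and N such that ‖x* − x_k‖ ≤ C k^{1/2 − p} for all k ≥ N. -/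
open scoped RealInnerProductSpace

set_option maxHeartbeats 1000000

/-- Bernoulli-type bound: `r^(-q) - (r+1)^(-q) ≤ q * r^(-q-1)` for `0 ≤ q ≤ 1`, `1 ≤ r`. -/
lemma gpm_bern_diff {q r : ℝ} (hq0 : 0 ≤ q) (hq1 : q ≤ 1) (hr : 1 ≤ r) :
    r ^ (-q) - (r + 1) ^ (-q) ≤ q * r ^ (-q - 1) := by
  have hr0 : (0 : ℝ) < r := lt_of_lt_of_le one_pos hr
  have hr1 : (0 : ℝ) < r + 1 := by linarith
  -- Bernoulli: (1 + 1/r)^q ≤ 1 + q * (1/r)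
  have hbern : (1 + 1 / r) ^ q ≤ 1 + q * (1 / r) :=
    rpow_one_add_le_one_add_mul_self (le_trans (by norm_num) (by positivity : (0:ℝ) ≤ 1 / r)) hq0 hq1
  have hsplit : (r + 1) ^ q = r ^ q * (1 + 1 / r) ^ q := by
    rw [← Real.mul_rpow hr0.le (by positivity)]
    congr 1
    field_simp
  have hbern' : r * (1 + 1 / r) ^ q ≤ r + q := by
    have := mul_le_mul_of_nonneg_left hbern hr0.le
    calc r * (1 + 1 / r) ^ q ≤ r * (1 + q * (1 / r)) := this
      _ = r + q := by field_simp
  have hb' : r * (r + 1) ^ q ≤ r ^ q * (r + q) := by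
    rw [hsplit]
    have h := mul_le_mul_of_nonneg_left hbern' (Real.rpow_nonneg hr0.le q)
    nlinarith [h]
  have hA : (0 : ℝ) < r ^ q := Real.rpow_pos_of_pos hr0 q
  have hE : (0 : ℝ) < (r + 1) ^ q := Real.rpow_pos_of_pos hr1 q
  have hkey : (r - q) * (r + 1) ^ q ≤ r ^ q * r := by
    rcases le_or_gt r q with h | h
    · have : (r - q) * (r + 1) ^ q ≤ 0 :=
        mul_nonpos_of_nonpos_of_nonneg (by linarith) hE.le
      nlinarith
    · have h1 : (r - q) * (r * (r + 1) ^ q) ≤ (r - q) * (r ^ q * (r + q)) :=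
        mul_le_mul_of_nonneg_left hb' (by linarith)
      nlinarith [h1, mul_nonneg hA.le (sq_nonneg q)]
  -- rewrite negatives as inverses
  have e1 : r ^ (-q) = (r ^ q)⁻¹ := Real.rpow_neg hr0.le q
  have e2 : (r + 1) ^ (-q) = ((r + 1) ^ q)⁻¹ := Real.rpow_neg hr1.le q
  have e3 : r ^ (-q - 1) = (r ^ q * r)⁻¹ := by
    rw [show (-q - 1 : ℝ) = -(q + 1) by ring, Real.rpow_neg hr0.le,
      Real.rpow_add hr0, Real.rpow_one]
  rw [e1, e2, e3]
  have hAr : (0 : ℝ) < r ^ q * r := by positivity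
  rw [show (r ^ q)⁻¹ - ((r + 1) ^ q)⁻¹ ≤ q * (r ^ q * r)⁻¹ ↔
      (r ^ q)⁻¹ - q * (r ^ q * r)⁻¹ ≤ ((r + 1) ^ q)⁻¹ by constructor <;> intro <;> linarith]
  have hlhs : (r ^ q)⁻¹ - q * (r ^ q * r)⁻¹ = (r - q) / (r ^ q * r) := by
    field_simp
  rw [hlhs, div_le_iff₀ hAr, ← sub_nonneg]
  have : ((r + 1) ^ q)⁻¹ * (r ^ q * r) - (r - q) = (r ^ q * r - (r - q) * (r + 1) ^ q) / (r + 1) ^ q := by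
    field_simp
  rw [this]
  apply div_nonneg _ hE.le
  linarith

/-- Rate of convergence `O(k^{1/2−p})` of the gradient projection method with
stepsizes `λ_k = 1/k^p`, `p ∈ (1/2,1)`, for strongly pseudomonotone VIs with modulus `1/2`. -/
theorem gpm_rate_p_between_half_and_one {n : ℕ} (K : Set (EuclideanSpace ℝ (Fin n)))
    (hKne : K.Nonempty) (hKcl : IsClosed K) (hKbd : Bornology.IsBounded K)
    (hKcv : Convex ℝ K)
    (F : EuclideanSpace ℝ (Fin n) → EuclideanSpace ℝ (Fin n))
    (hFcont : ContinuousOn F K)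
    (p : ℝ) (hp : 1 / 2 < p ∧ p < 1)
    (hSPM : ∀ x ∈ K, ∀ y ∈ K, 0 ≤ ⟪F y, x - y⟫ → (1 / 2) * ‖x - y‖ ^ 2 ≤ ⟪F x, x - y⟫)
    (proj : EuclideanSpace ℝ (Fin n) → EuclideanSpace ℝ (Fin n))
    (hproj_mem : ∀ z, proj z ∈ K)
    (hproj_char : ∀ z, ∀ y ∈ K, ⟪z - proj z, y - proj z⟫ ≤ 0)
    (xs : EuclideanSpace ℝ (Fin n)) (hxs_mem : xs ∈ K)
    (hxs_sol : ∀ y ∈ K, 0 ≤ ⟪F xs, y - xs⟫)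
    (hxs_uniq : ∀ z ∈ K, (∀ y ∈ K, 0 ≤ ⟪F z, y - z⟫) → z = xs)
    (x : ℕ → EuclideanSpace ℝ (Fin n))
    (hx1 : x 1 ∈ K)
    (hrec : ∀ k ≥ 1, x (k + 1) = proj (x k - (1 / (k : ℝ) ^ p) • F (x k))) :
    ∃ C > 0, ∃ N : ℕ, ∀ k ≥ N, ‖xs - x k‖ ≤ C * (k : ℝ) ^ ((1 : ℝ) / 2 - p) := by
  obtain ⟨hp1, hp2⟩ := hp
  -- membership of the iterates
  have hmem : ∀ k : ℕ, 1 ≤ k → x k ∈ K := by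
    intro k hk
    induction k, hk using Nat.le_induction with
    | base => exact hx1
    | succ k hk ih => rw [hrec k hk]; exact hproj_mem _
  -- compactness and bounds
  have hKcp : IsCompact K := Metric.isCompact_of_isClosed_isBounded hKcl hKbd
  obtain ⟨M₀, hM₀⟩ := hKcp.exists_bound_of_continuousOn hFcont
  set M : ℝ := max M₀ 0 with hM_def
  have hM0 : 0 ≤ M := le_max_right _ _
  have hM : ∀ y ∈ K, ‖F y‖ ≤ M := fun y hy => le_trans (hM₀ y hy) (le_max_left _ _)
  obtain ⟨D₀, hD₀⟩ := Metric.isBounded_iff.mp hKbd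
  set D : ℝ := max D₀ 0 with hD_def
  have hD0 : 0 ≤ D := le_max_right _ _
  have hD : ∀ u ∈ K, ∀ v ∈ K, ‖u - v‖ ≤ D := by
    intro u hu v hv
    rw [← dist_eq_norm]
    exact le_trans (hD₀ hu hv) (le_max_left _ _)
  set q : ℝ := 2 * p - 1 with hq_def
  have hq0 : 0 < q := by simp only [hq_def]; linarith
  have hq1 : q < 1 := by simp only [hq_def]; linarith
  -- one-step estimate
  have step : ∀ k : ℕ, 1 ≤ k →
      ‖xs - x (k + 1)‖ ^ 2 ≤ (1 - (k : ℝ) ^ (-p)) * ‖xs - x k‖ ^ 2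
        + ((k : ℝ) ^ (-p)) ^ 2 * M ^ 2 := by
    intro k hk
    have hk0 : (0 : ℝ) < (k : ℝ) := by exact_mod_cast hk
    set lam : ℝ := (k : ℝ) ^ (-p) with hlam_def
    have hlam0 : 0 ≤ lam := Real.rpow_nonneg hk0.le _
    have hlam_eq : (1 : ℝ) / (k : ℝ) ^ p = lam := by
      rw [hlam_def, Real.rpow_neg hk0.le, one_div]
    set u : EuclideanSpace ℝ (Fin n) := x k with hu_def
    set v : EuclideanSpace ℝ (Fin n) := x (k + 1) with hv_def
    have huK : u ∈ K := hmem k hk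
    have hvproj : v = proj (u - lam • F u) := by
      rw [hv_def, hrec k hk, hlam_eq]
    -- projection inequality
    have hpi : ⟪(u - lam • F u) - v, xs - v⟫ ≤ 0 := by
      rw [hvproj]; exact hproj_char _ xs hxs_mem
    have hpi' : ⟪u - v, xs - v⟫ - lam * ⟪F u, xs - v⟫ ≤ 0 := by
      have : (u - lam • F u) - v = (u - v) - lam • F u := by abel
      rw [this, inner_sub_left, real_inner_smul_left] at hpi
      linarith
    -- decompositions
    have hdec1 : ⟪u - v, xs - v⟫ = ⟪xs - u, u - v⟫ + ‖u - v‖ ^ 2 := by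
      have hxv : xs - v = (xs - u) + (u - v) := by abel
      rw [hxv, inner_add_right, real_inner_comm (u - v) (xs - u),
        real_inner_self_eq_norm_sq]
    have hdec2 : ⟪F u, xs - v⟫ = ⟪F u, xs - u⟫ + ⟪F u, u - v⟫ := by
      have hxv : xs - v = (xs - u) + (u - v) := by abel
      rw [hxv, inner_add_right]
    -- strong pseudomonotonicity
    have hspm : (1 / 2) * ‖u - xs‖ ^ 2 ≤ ⟪F u, u - xs⟫ :=
      hSPM u huK xs hxs_mem (hxs_sol u huK)
    have hI1 : ⟪F u, xs - u⟫ ≤ -((1 / 2) * ‖u - xs‖ ^ 2) := by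
      have : ⟪F u, xs - u⟫ = -⟪F u, u - xs⟫ := by
        rw [← inner_neg_right]; congr 1; abel
      rw [this]; linarith
    -- Cauchy-Schwarz
    have hI2 : ⟪F u, u - v⟫ ≤ M * ‖u - v‖ := by
      calc ⟪F u, u - v⟫ ≤ ‖F u‖ * ‖u - v‖ := real_inner_le_norm _ _
        _ ≤ M * ‖u - v‖ := mul_le_mul_of_nonneg_right (hM u huK) (norm_nonneg _)
    -- norm identity
    have hid : ‖xs - v‖ ^ 2 = ‖xs - u‖ ^ 2 + 2 * ⟪xs - u, u - v⟫ + ‖u - v‖ ^ 2 := by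
      have hxv : xs - v = (xs - u) + (u - v) := by abel
      rw [hxv, norm_add_sq_real]
    have hnorm_eq : ‖u - xs‖ = ‖xs - u‖ := by rw [norm_sub_rev]
    rw [hnorm_eq] at hspm hI1
    -- assemble
    have h2 : ⟪xs - u, u - v⟫ + ‖u - v‖ ^ 2 ≤ lam * (⟪F u, xs - u⟫ + ⟪F u, u - v⟫) := by
      rw [hdec1, hdec2] at hpi'; linarith
    have hb0 : 0 ≤ ‖u - v‖ := norm_nonneg _
    nlinarith [mul_le_mul_of_nonneg_left hI1 hlam0, mul_le_mul_of_nonneg_left hI2 hlam0,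
      sq_nonneg (‖u - v‖ - lam * M)]
  -- choose N
  set t : ℝ := q + M ^ 2 with ht_def
  have ht0 : 0 < t := by positivity
  set N : ℕ := max 1 ⌈t ^ (1 - p)⁻¹⌉₊ with hN_def
  have hN1 : 1 ≤ N := le_max_left _ _
  have hNbig : ∀ k : ℕ, N ≤ k → t ≤ (k : ℝ) ^ (1 - p) := by
    intro k hk
    have h1 : t ^ (1 - p)⁻¹ ≤ (k : ℝ) := by
      calc t ^ (1 - p)⁻¹ ≤ (⌈t ^ (1 - p)⁻¹⌉₊ : ℝ) := Nat.le_ceil _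
        _ ≤ (N : ℝ) := by exact_mod_cast Nat.cast_le.mpr (le_max_right _ _)
        _ ≤ (k : ℝ) := by exact_mod_cast hk
    have h2 : (t ^ (1 - p)⁻¹) ^ (1 - p) ≤ (k : ℝ) ^ (1 - p) :=
      Real.rpow_le_rpow (Real.rpow_nonneg ht0.le _) h1 (by linarith)
    rwa [← Real.rpow_mul ht0.le, inv_mul_cancel₀ (by linarith : (1 : ℝ) - p ≠ 0),
      Real.rpow_one] at h2
  -- the constant
  set C : ℝ := max 1 (D ^ 2 * (N : ℝ) ^ (q : ℝ)) with hC_def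
  have hC1 : 1 ≤ C := le_max_left _ _
  have hC0 : 0 < C := lt_of_lt_of_le one_pos hC1
  -- main induction: squared bound
  have key : ∀ k : ℕ, N ≤ k → ‖xs - x k‖ ^ 2 ≤ C * (k : ℝ) ^ (-q) := by
    intro k hk
    induction k, hk using Nat.le_induction with
    | base =>
      have hN0 : (0 : ℝ) < (N : ℝ) := by exact_mod_cast Nat.lt_of_lt_of_le one_pos hN1
      have h1 : ‖xs - x N‖ ≤ D := hD xs hxs_mem (x N) (hmem N hN1)
      have h2 : ‖xs - x N‖ ^ 2 ≤ D ^ 2 := by nlinarith [norm_nonneg (xs - x N)]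
      have h3 : D ^ 2 = D ^ 2 * (N : ℝ) ^ (q : ℝ) * (N : ℝ) ^ (-q) := by
        rw [mul_assoc, ← Real.rpow_add hN0, add_neg_cancel, Real.rpow_zero, mul_one]
      have h4 : D ^ 2 * (N : ℝ) ^ (q : ℝ) ≤ C := le_max_right _ _
      calc ‖xs - x N‖ ^ 2 ≤ D ^ 2 := h2
        _ = D ^ 2 * (N : ℝ) ^ (q : ℝ) * (N : ℝ) ^ (-q) := h3
        _ ≤ C * (N : ℝ) ^ (-q) :=
          mul_le_mul_of_nonneg_right h4 (Real.rpow_nonneg hN0.le _)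
    | succ k hk ih =>
      have hk1 : 1 ≤ k := le_trans hN1 hk
      have hk0 : (0 : ℝ) < (k : ℝ) := by exact_mod_cast hk1
      have hk0' : (1 : ℝ) ≤ (k : ℝ) := by exact_mod_cast hk1
      set lam : ℝ := (k : ℝ) ^ (-p) with hlam_def
      have hlam0 : 0 ≤ lam := Real.rpow_nonneg hk0.le _
      have hlam1 : lam ≤ 1 := by
        rw [hlam_def]
        exact Real.rpow_le_one_of_one_le_of_nonpos hk0' (by linarith)
      have hstep := step k hk1
      -- rpow arithmetic
      have e_lam_sq : lam ^ 2 = (k : ℝ) ^ (-(2 * p)) := by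
        rw [hlam_def, ← Real.rpow_natCast ((k:ℝ) ^ (-p)) 2, ← Real.rpow_mul hk0.le]
        congr 1
        push_cast
        ring
      have e_mul : lam * (k : ℝ) ^ (-q) = (k : ℝ) ^ (1 - p) * (k : ℝ) ^ (-(2 * p)) := by
        rw [hlam_def, ← Real.rpow_add hk0, ← Real.rpow_add hk0]
        congr 1
        simp only [hq_def]; ring
      -- Bernoulli difference bound
      have hbern := gpm_bern_diff hq0.le hq1.le hk0'
      have e_bd : (k : ℝ) ^ (-q - 1) = (k : ℝ) ^ (-(2 * p)) := by
        congr 1; simp only [hq_def]; ring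
      rw [e_bd] at hbern
      have hcast : ((k + 1 : ℕ) : ℝ) = (k : ℝ) + 1 := by push_cast; ring
      have hbig : t ≤ (k : ℝ) ^ (1 - p) := hNbig k hk
      have hpow2p : (0 : ℝ) < (k : ℝ) ^ (-(2 * p)) := Real.rpow_pos_of_pos hk0 _
      have hpowq : (0 : ℝ) ≤ (k : ℝ) ^ (-q) := Real.rpow_nonneg hk0.le _
      -- combine
      have h5 : (1 - lam) * ‖xs - x k‖ ^ 2 ≤ (1 - lam) * (C * (k : ℝ) ^ (-q)) :=
        mul_le_mul_of_nonneg_left ih (by linarith)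
      have h6 : ‖xs - x (k + 1)‖ ^ 2 ≤
          C * (k : ℝ) ^ (-q) - C * ((k : ℝ) ^ (1 - p) * (k : ℝ) ^ (-(2 * p)))
            + M ^ 2 * (k : ℝ) ^ (-(2 * p)) := by
        have := hstep
        calc ‖xs - x (k + 1)‖ ^ 2
            ≤ (1 - lam) * ‖xs - x k‖ ^ 2 + lam ^ 2 * M ^ 2 := this
          _ ≤ (1 - lam) * (C * (k : ℝ) ^ (-q)) + lam ^ 2 * M ^ 2 := by linarith
          _ = C * (k : ℝ) ^ (-q) - C * (lam * (k : ℝ) ^ (-q))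
              + M ^ 2 * (k : ℝ) ^ (-(2 * p)) := by rw [e_lam_sq]; ring
          _ = C * (k : ℝ) ^ (-q) - C * ((k : ℝ) ^ (1 - p) * (k : ℝ) ^ (-(2 * p)))
              + M ^ 2 * (k : ℝ) ^ (-(2 * p)) := by rw [e_mul]
      have h7 : C * (k : ℝ) ^ (-q) - C * q * (k : ℝ) ^ (-(2 * p)) ≤
          C * ((k : ℝ) + 1) ^ (-q) := by
        have hb2 : C * ((k : ℝ) ^ (-q) - ((k : ℝ) + 1) ^ (-q)) ≤
            C * (q * (k : ℝ) ^ (-(2 * p))) := mul_le_mul_of_nonneg_left hbern hC0.le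
        rw [mul_sub] at hb2
        have : C * (q * (k : ℝ) ^ (-(2 * p))) = C * q * (k : ℝ) ^ (-(2 * p)) := by ring
        linarith [hb2, this.le, this.ge]
      rw [hcast]
      have h8 : C * q + M ^ 2 ≤ C * (k : ℝ) ^ (1 - p) := by
        have : C * q + M ^ 2 ≤ C * t := by
          simp only [ht_def]
          nlinarith [mul_nonneg (sub_nonneg.mpr hC1) (sq_nonneg M)]
        calc C * q + M ^ 2 ≤ C * t := this
          _ ≤ C * (k : ℝ) ^ (1 - p) := mul_le_mul_of_nonneg_left hbig hC0.le
      have h9 : (C * q + M ^ 2) * (k : ℝ) ^ (-(2 * p)) ≤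
          C * (k : ℝ) ^ (1 - p) * (k : ℝ) ^ (-(2 * p)) :=
        mul_le_mul_of_nonneg_right h8 hpow2p.le
      have h10 : (C * q + M ^ 2) * (k : ℝ) ^ (-(2 * p)) =
          C * q * (k : ℝ) ^ (-(2 * p)) + M ^ 2 * (k : ℝ) ^ (-(2 * p)) := by ring
      have h11 : C * (k : ℝ) ^ (1 - p) * (k : ℝ) ^ (-(2 * p)) =
          C * ((k : ℝ) ^ (1 - p) * (k : ℝ) ^ (-(2 * p))) := by ring
      linarith [h9, h10.le, h10.ge, h11.le, h11.ge]
  -- conclude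
  refine ⟨Real.sqrt C, Real.sqrt_pos.mpr hC0, N, ?_⟩
  intro k hk
  have hk1 : 1 ≤ k := le_trans hN1 hk
  have hk0 : (0 : ℝ) < (k : ℝ) := by exact_mod_cast hk1
  have h1 := key k hk
  have h2 : ‖xs - x k‖ ≤ Real.sqrt (C * (k : ℝ) ^ (-q)) := by
    have := Real.sqrt_le_sqrt h1
    rwa [Real.sqrt_sq (norm_nonneg _)] at this
  have h3 : Real.sqrt (C * (k : ℝ) ^ (-q)) =
      Real.sqrt C * (k : ℝ) ^ ((1 : ℝ) / 2 - p) := by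
    rw [Real.sqrt_mul hC0.le, Real.sqrt_eq_rpow ((k : ℝ) ^ (-q)),
      ← Real.rpow_mul hk0.le]
    congr 1
    simp only [hq_def]; ring
  rw [h3] at h2
  exact h2
end

section
/- Let K ⊂ ℝⁿ be a non-empty closed bounded convex set, let F : K → ℝⁿ be continuous and strongly pseudomonotone with modulus 1/2, let p ∈ (0, 1/2], and let x* be the unique solution of VI(K, F). For any x_1 ∈ K, define x_{k+1} = pr_K(x_k − (1/k^p) F(x_k)) for k ≥ 1. Then ‖x* − x_k‖ converges to 0 with rate O(k^{−p/2}), i.e., there exist C > 0 and N such that ‖x* − x_k‖ ≤ C k^{−p/2} for all k ≥ N. -/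
open scoped RealInnerProductSpace

/-- Bernoulli-type step estimate: `t^(-p) - (t+1)^(-p) ≤ p * (t^(-p))^2` for `t ≥ 1`,
`0 ≤ p ≤ 1`. -/
lemma gpm_aux_rpow_step {p t : ℝ} (hp0 : 0 ≤ p) (hp1 : p ≤ 1) (ht : 1 ≤ t) :
    t ^ (-p) - (t + 1) ^ (-p) ≤ p * (t ^ (-p)) ^ 2 := by
  have ht0 : (0:ℝ) < t := by linarith
  have hA : 0 < t ^ p := Real.rpow_pos_of_pos ht0 p
  have hA1 : t ^ (-p) = (t ^ p)⁻¹ := Real.rpow_neg ht0.le p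
  have hs0 : 0 ≤ 1 / t := by positivity
  -- Bernoulli: (1+1/t)^p ≤ 1 + p/t
  have hber : (1 + 1 / t) ^ p ≤ 1 + p * (1 / t) :=
    rpow_one_add_le_one_add_mul_self (by linarith) hp0 hp1
  have hb : (t + 1) ^ p ≤ t ^ p * (1 + p / t) := by
    have h1 : t + 1 = t * (1 + 1 / t) := by field_simp
    rw [h1, Real.mul_rpow ht0.le (by positivity)]
    have := mul_le_mul_of_nonneg_left hber hA.le
    calc t ^ p * (1 + 1 / t) ^ p ≤ t ^ p * (1 + p * (1 / t)) := this
      _ = t ^ p * (1 + p / t) := by ring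
  have hBpos : 0 < (t + 1) ^ p := Real.rpow_pos_of_pos (by linarith) p
  have hinv1 : (t ^ p * (1 + p / t))⁻¹ ≤ ((t + 1) ^ p)⁻¹ :=
    inv_anti₀ hBpos hb
  have hst : 0 ≤ p / t := by positivity
  have hst1 : p / t ≤ 1 := by
    rw [div_le_one ht0]; linarith
  have hinv2 : (t ^ p)⁻¹ * (1 - p / t) ≤ (t ^ p * (1 + p / t))⁻¹ := by
    rw [mul_inv]
    have h1 : (1 - p / t) ≤ (1 + p / t)⁻¹ := by
      rw [← one_div, le_div_iff₀ (by linarith : (0:ℝ) < 1 + p / t)]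
      nlinarith
    exact mul_le_mul_of_nonneg_left h1 (by positivity)
  have hlow : t ^ (-p) * (1 - p / t) ≤ (t + 1) ^ (-p) := by
    rw [hA1, Real.rpow_neg (by linarith : (0:ℝ) ≤ t + 1) p]
    exact le_trans hinv2 hinv1
  have hinvt : t⁻¹ ≤ t ^ (-p) := by
    rw [← Real.rpow_neg_one t]
    exact Real.rpow_le_rpow_of_exponent_le ht (by linarith)
  have hl0 : 0 ≤ t ^ (-p) := (Real.rpow_pos_of_pos ht0 _).le
  have : t ^ (-p) - (t + 1) ^ (-p) ≤ t ^ (-p) * (p / t) := by nlinarith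
  have h2 : t ^ (-p) * (p / t) = p * (t ^ (-p) * t⁻¹) := by
    field_simp
  nlinarith [mul_le_mul_of_nonneg_left hinvt hl0]

/-- Rate of convergence `O(k^{−p/2})` of the gradient projection method with
stepsizes `λ_k = 1/k^p`, `p ∈ (0,1/2]`, for strongly pseudomonotone VIs with modulus `1/2`. -/
theorem gpm_rate_p_at_most_half {n : ℕ} (K : Set (EuclideanSpace ℝ (Fin n)))
    (hKne : K.Nonempty) (hKcl : IsClosed K) (hKbd : Bornology.IsBounded K)
    (hKcv : Convex ℝ K)
    (F : EuclideanSpace ℝ (Fin n) → EuclideanSpace ℝ (Fin n))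
    (hFcont : ContinuousOn F K)
    (p : ℝ) (hp : 0 < p ∧ p ≤ 1 / 2)
    (hSPM : ∀ x ∈ K, ∀ y ∈ K, 0 ≤ ⟪F y, x - y⟫ → (1 / 2) * ‖x - y‖ ^ 2 ≤ ⟪F x, x - y⟫)
    (proj : EuclideanSpace ℝ (Fin n) → EuclideanSpace ℝ (Fin n))
    (hproj_mem : ∀ z, proj z ∈ K)
    (hproj_char : ∀ z, ∀ y ∈ K, ⟪z - proj z, y - proj z⟫ ≤ 0)
    (xs : EuclideanSpace ℝ (Fin n)) (hxs_mem : xs ∈ K)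
    (hxs_sol : ∀ y ∈ K, 0 ≤ ⟪F xs, y - xs⟫)
    (hxs_uniq : ∀ z ∈ K, (∀ y ∈ K, 0 ≤ ⟪F z, y - z⟫) → z = xs)
    (x : ℕ → EuclideanSpace ℝ (Fin n))
    (hx1 : x 1 ∈ K)
    (hrec : ∀ k ≥ 1, x (k + 1) = proj (x k - (1 / (k : ℝ) ^ p) • F (x k))) :
    ∃ C > 0, ∃ N : ℕ, ∀ k ≥ N, ‖xs - x k‖ ≤ C * (k : ℝ) ^ (-(p / 2)) := by
  obtain ⟨hp0, hp2⟩ := hp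
  have hKcp : IsCompact K := Metric.isCompact_of_isClosed_isBounded hKcl hKbd
  obtain ⟨M, hM⟩ := hKcp.exists_bound_of_continuousOn hFcont
  have hM0 : 0 ≤ M := (norm_nonneg _).trans (hM xs hxs_mem)
  set C : ℝ := max (‖x 1 - xs‖ ^ 2) (2 * M ^ 2) with hCdef
  have hC0 : (0:ℝ) ≤ C := le_trans (by positivity) (le_max_right _ _)
  have hCM : 2 * M ^ 2 ≤ C := le_max_right _ _
  -- membership of iterates
  have hmem : ∀ k, 1 ≤ k → x k ∈ K := by
    intro k hk
    induction k with
    | zero => omega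
    | succ m ih =>
      rcases Nat.lt_or_ge m 1 with h | h
      · obtain rfl : m = 0 := by omega
        exact hx1
      · rw [hrec m h]; exact hproj_mem _
  -- one-step estimate
  have hstep : ∀ u ∈ K, ∀ lam : ℝ, 0 < lam →
      ‖proj (u - lam • F u) - xs‖ ^ 2 ≤ (1 - lam) * ‖u - xs‖ ^ 2 + lam ^ 2 * M ^ 2 := by
    intro u hu lam hlam
    set v := proj (u - lam • F u) with hv
    have h1 : ⟪(u - lam • F u) - v, xs - v⟫ ≤ 0 := hproj_char _ xs hxs_mem
    have h2 : 0 ≤ ⟪F xs, u - xs⟫ := hxs_sol u hu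
    have h3 : (1 / 2) * ‖u - xs‖ ^ 2 ≤ ⟪F u, u - xs⟫ := hSPM u hu xs hxs_mem h2
    have hFu : ‖F u‖ ≤ M := hM u hu
    -- expand projection inequality
    have e1 : (u - lam • F u) - v = (u - v) - lam • F u := by
      abel
    rw [e1, inner_sub_left, real_inner_smul_left] at h1
    -- identity
    have hid : ‖u - xs‖ ^ 2 = ‖u - v‖ ^ 2 + 2 * ⟪u - v, v - xs⟫ + ‖v - xs‖ ^ 2 := by
      have h := norm_add_sq_real (u - v) (v - xs)
      rw [sub_add_sub_cancel] at h
      exact h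
    -- decompositions
    have d1 : ⟪u - v, xs - v⟫ = -⟪u - v, v - xs⟫ := by
      rw [show xs - v = -(v - xs) by abel, inner_neg_right]
    have d2 : ⟪F u, xs - v⟫ = -⟪F u, u - xs⟫ + ⟪F u, u - v⟫ := by
      rw [show xs - v = -(u - xs) + (u - v) by abel, inner_add_right, inner_neg_right]
    -- quadratic bound
    have h4 : 0 ≤ ‖lam • F u - (u - v)‖ ^ 2 := by positivity
    have h4' : ‖lam • F u - (u - v)‖ ^ 2
        = lam ^ 2 * ‖F u‖ ^ 2 - 2 * (lam * ⟪F u, u - v⟫) + ‖u - v‖ ^ 2 := by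
      rw [norm_sub_sq_real, norm_smul, real_inner_smul_left, Real.norm_eq_abs, mul_pow, sq_abs]
    rw [h4'] at h4
    rw [d1, d2] at h1
    nlinarith [mul_le_mul_of_nonneg_left h3 hlam.le, sq_nonneg lam,
      mul_le_mul hFu hFu (norm_nonneg _) hM0, sq_nonneg (‖F u‖)]
  -- main induction
  have key : ∀ k, 1 ≤ k → ‖x k - xs‖ ^ 2 ≤ C * (k : ℝ) ^ (-p) := by
    intro k hk
    induction k with
    | zero => omega
    | succ m ih =>
      rcases Nat.lt_or_ge m 1 with h | h
      · obtain rfl : m = 0 := by omega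
        norm_num [Real.one_rpow]
        exact le_max_left _ _
      · have ihm := ih h
        have ht1 : (1:ℝ) ≤ (m:ℝ) := by exact_mod_cast h
        have ht0 : (0:ℝ) < (m:ℝ) := by linarith
        set lam : ℝ := (m:ℝ) ^ (-p) with hlamdef
        have hlam_eq : (1 / (m:ℝ) ^ p) = lam := by
          rw [hlamdef, Real.rpow_neg ht0.le, one_div]
        have hlam_pos : 0 < lam := Real.rpow_pos_of_pos ht0 _
        have hlam_le1 : lam ≤ 1 := Real.rpow_le_one_of_one_le_of_nonpos ht1 (by linarith)
        have hx' := hstep (x m) (hmem m h) lam hlam_pos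
        have hxr : x (m + 1) = proj (x m - lam • F (x m)) := by
          rw [hrec m h, hlam_eq]
        rw [← hxr] at hx'
        have hber := gpm_aux_rpow_step hp0.le (by linarith) ht1
        have hcast : ((m + 1 : ℕ) : ℝ) = (m:ℝ) + 1 := by push_cast; ring
        rw [hcast]
        set mu : ℝ := ((m:ℝ) + 1) ^ (-p) with hmudef
        have hmu0 : 0 ≤ mu := (Real.rpow_pos_of_pos (by linarith) _).le
        have f1 : (1 - lam) * ‖x m - xs‖ ^ 2 ≤ (1 - lam) * (C * lam) :=
          mul_le_mul_of_nonneg_left ihm (by linarith)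
        have f2 : C * (lam - mu) ≤ C * (p * lam ^ 2) :=
          mul_le_mul_of_nonneg_left hber hC0
        nlinarith [sq_nonneg lam, mul_nonneg hC0 (sq_nonneg lam),
          mul_le_mul_of_nonneg_right hCM (sq_nonneg lam),
          mul_le_mul_of_nonneg_left hp2 (mul_nonneg hC0 (sq_nonneg lam))]
  -- conclusion
  refine ⟨Real.sqrt C + 1, by positivity, 1, ?_⟩
  intro k hk
  have hk1 : (1:ℝ) ≤ (k:ℝ) := by exact_mod_cast hk
  have hk0 : (0:ℝ) ≤ (k:ℝ) := by linarith
  have hkey := key k hk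
  have hrw : ‖xs - x k‖ = Real.sqrt (‖x k - xs‖ ^ 2) := by
    rw [Real.sqrt_sq (norm_nonneg _), norm_sub_rev]
  have hb : Real.sqrt (‖x k - xs‖ ^ 2) ≤ Real.sqrt (C * (k:ℝ) ^ (-p)) :=
    Real.sqrt_le_sqrt hkey
  have hsplit : Real.sqrt (C * (k:ℝ) ^ (-p))
      = Real.sqrt C * (k:ℝ) ^ (-(p/2)) := by
    rw [Real.sqrt_mul hC0, Real.sqrt_eq_rpow ((k:ℝ) ^ (-p)), ← Real.rpow_mul hk0]
    congr 1
    ring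
  have hrp0 : 0 ≤ (k:ℝ) ^ (-(p/2)) := (Real.rpow_pos_of_pos (by linarith) _).le
  have hsq0 : 0 ≤ Real.sqrt C := Real.sqrt_nonneg C
  calc ‖xs - x k‖ = Real.sqrt (‖x k - xs‖ ^ 2) := hrw
    _ ≤ Real.sqrt (C * (k:ℝ) ^ (-p)) := hb
    _ = Real.sqrt C * (k:ℝ) ^ (-(p/2)) := hsplit
    _ ≤ (Real.sqrt C + 1) * (k:ℝ) ^ (-(p/2)) := by nlinarith
end

section
/- Let M > 0 and let {a_k} be a sequence of non-negative reals satisfying a_{k+1} ≤ (1 − 1/k) a_k + M²/k² for all k ≥ 1. Then a_{k+1} ≤ a_2/k + (M²/k)(1/2 + 1/3 + ⋯ + 1/k) for all k ≥ 2, and consequently a_{k+1} ≤ 2(a_2 + M²) (ln(k+1))/(k+1) for all k ≥ 3. -/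
lemma sum_inv_le_log : ∀ k : ℕ, 1 ≤ k →
    ∑ i ∈ Finset.Icc 2 k, (1 : ℝ) / (i : ℝ) ≤ Real.log k := by
  intro k hk
  induction k with
  | zero => omega
  | succ n ih =>
    rcases Nat.lt_or_ge n 1 with h | h
    · interval_cases n
      · simp
    · have hsum := ih h
      rw [Finset.sum_Icc_succ_top (by omega : 2 ≤ n + 1)]
      have hn : (1 : ℝ) ≤ (n : ℝ) := by exact_mod_cast h
      have hpos : (0 : ℝ) < n := by linarith
      have hpos1 : (0 : ℝ) < (n : ℝ) + 1 := by linarith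
      have hlog : Real.log ((n : ℝ) / ((n : ℝ) + 1)) ≤ (n : ℝ) / ((n : ℝ) + 1) - 1 :=
        Real.log_le_sub_one_of_pos (by positivity)
      rw [Real.log_div (ne_of_gt hpos) (ne_of_gt hpos1)] at hlog
      have : (1 : ℝ) / ((n : ℝ) + 1) ≤ Real.log ((n : ℝ) + 1) - Real.log n := by
        have : (n : ℝ) / ((n : ℝ) + 1) - 1 = -(1 / ((n : ℝ) + 1)) := by
          field_simp
          ring
        linarith [hlog, this ▸ hlog]
      push_cast
      linarith

/-- Recursive estimate for the case `p = 1`: if `a_{k+1} ≤ (1 − 1/k) a_k + M²/k²`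
for all `k ≥ 1`, then `a_{k+1} ≤ a_2/k + (M²/k)(1/2 + ⋯ + 1/k)` for `k ≥ 2`, and
consequently `a_{k+1} ≤ 2(a_2 + M²) ln(k+1)/(k+1)` for `k ≥ 3`. -/
theorem rate_estimate_p_one (M : ℝ) (hM : 0 < M) (a : ℕ → ℝ)
    (ha_nonneg : ∀ k, 0 ≤ a k)
    (hrec : ∀ k ≥ 1, a (k + 1) ≤ (1 - 1 / (k : ℝ)) * a k + M ^ 2 / (k : ℝ) ^ 2) :
    (∀ k ≥ 2, a (k + 1) ≤ a 2 / (k : ℝ) +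
        (M ^ 2 / (k : ℝ)) * ∑ i ∈ Finset.Icc 2 k, (1 : ℝ) / (i : ℝ)) ∧
    (∀ k ≥ 3, a (k + 1) ≤ 2 * (a 2 + M ^ 2) * Real.log ((k : ℝ) + 1) / ((k : ℝ) + 1)) := by
  have part1 : ∀ k ≥ 2, a (k + 1) ≤ a 2 / (k : ℝ) +
      (M ^ 2 / (k : ℝ)) * ∑ i ∈ Finset.Icc 2 k, (1 : ℝ) / (i : ℝ) := by
    intro k hk
    induction k, hk using Nat.le_induction with
    | base =>
      have h := hrec 2 (by norm_num)
      simp only [Finset.Icc_self, Finset.sum_singleton] at *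
      norm_num at h ⊢
      try linarith
    | succ n hn ih =>
      have h := hrec (n + 1) (by omega)
      have hn1 : (2 : ℝ) ≤ (n : ℝ) := by exact_mod_cast hn
      have hnpos : (0 : ℝ) < (n : ℝ) := by linarith
      have hn1pos : (0 : ℝ) < (n : ℝ) + 1 := by linarith
      have hcoef : (0 : ℝ) ≤ 1 - 1 / ((n : ℝ) + 1) := by
        rw [sub_nonneg, div_le_one hn1pos]; linarith
      push_cast at h
      have key : a (n + 1 + 1) ≤ (1 - 1 / ((n : ℝ) + 1)) *
          (a 2 / (n : ℝ) + (M ^ 2 / (n : ℝ)) * ∑ i ∈ Finset.Icc 2 n, (1 : ℝ) / (i : ℝ))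
          + M ^ 2 / ((n : ℝ) + 1) ^ 2 := by
        calc a (n + 1 + 1) ≤ (1 - 1 / ((n : ℝ) + 1)) * a (n + 1) + M ^ 2 / ((n : ℝ) + 1) ^ 2 := h
        _ ≤ _ := by
            gcongr
      rw [Finset.sum_Icc_succ_top (by omega : 2 ≤ n + 1)]
      push_cast
      have heq : (1 - 1 / ((n : ℝ) + 1)) *
          (a 2 / (n : ℝ) + (M ^ 2 / (n : ℝ)) * ∑ i ∈ Finset.Icc 2 n, (1 : ℝ) / (i : ℝ))
          + M ^ 2 / ((n : ℝ) + 1) ^ 2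
          = a 2 / ((n : ℝ) + 1) + (M ^ 2 / ((n : ℝ) + 1)) *
            ((∑ i ∈ Finset.Icc 2 n, (1 : ℝ) / (i : ℝ)) + 1 / ((n : ℝ) + 1)) := by
        field_simp
        ring
      linarith [key, heq ▸ key]
  refine ⟨part1, ?_⟩
  intro k hk
  have hk2 : k ≥ 2 := by omega
  have h1 := part1 k hk2
  have hkr : (3 : ℝ) ≤ (k : ℝ) := by exact_mod_cast hk
  have hkpos : (0 : ℝ) < (k : ℝ) := by linarith
  have hk1pos : (0 : ℝ) < (k : ℝ) + 1 := by linarith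
  have hsum := sum_inv_le_log k (by omega)
  have hsumnn : 0 ≤ ∑ i ∈ Finset.Icc 2 k, (1 : ℝ) / (i : ℝ) :=
    Finset.sum_nonneg fun i _ => by positivity
  have hlogmono : Real.log (k : ℝ) ≤ Real.log ((k : ℝ) + 1) :=
    Real.log_le_log hkpos (by linarith)
  have hlog1 : (1 : ℝ) ≤ Real.log ((k : ℝ) + 1) := by
    rw [Real.le_log_iff_exp_le hk1pos]
    have := Real.exp_one_lt_d9
    linarith
  have hinv : (1 : ℝ) / (k : ℝ) ≤ 2 / ((k : ℝ) + 1) := by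
    rw [div_le_div_iff₀ hkpos hk1pos]; linarith
  have hterm1 : a 2 / (k : ℝ) ≤ 2 * a 2 * Real.log ((k : ℝ) + 1) / ((k : ℝ) + 1) := by
    have h2 : a 2 / (k : ℝ) ≤ 2 * a 2 / ((k : ℝ) + 1) := by
      rw [div_le_div_iff₀ hkpos hk1pos]
      nlinarith [ha_nonneg 2]
    calc a 2 / (k : ℝ) ≤ 2 * a 2 / ((k : ℝ) + 1) := h2
      _ ≤ 2 * a 2 * Real.log ((k : ℝ) + 1) / ((k : ℝ) + 1) := by
          gcongr ?_ / _
          nlinarith [ha_nonneg 2]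
  have hterm2 : (M ^ 2 / (k : ℝ)) * ∑ i ∈ Finset.Icc 2 k, (1 : ℝ) / (i : ℝ)
      ≤ 2 * M ^ 2 * Real.log ((k : ℝ) + 1) / ((k : ℝ) + 1) := by
    have hS : ∑ i ∈ Finset.Icc 2 k, (1 : ℝ) / (i : ℝ) ≤ Real.log ((k : ℝ) + 1) :=
      le_trans hsum hlogmono
    have : (M ^ 2 / (k : ℝ)) * ∑ i ∈ Finset.Icc 2 k, (1 : ℝ) / (i : ℝ)
        ≤ (M ^ 2 / (k : ℝ)) * Real.log ((k : ℝ) + 1) := by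
      gcongr
    calc (M ^ 2 / (k : ℝ)) * ∑ i ∈ Finset.Icc 2 k, (1 : ℝ) / (i : ℝ)
        ≤ (M ^ 2 / (k : ℝ)) * Real.log ((k : ℝ) + 1) := this
      _ ≤ (2 * M ^ 2 / ((k : ℝ) + 1)) * Real.log ((k : ℝ) + 1) := by
          apply mul_le_mul_of_nonneg_right ?_ (by linarith)
          rw [div_le_div_iff₀ hkpos hk1pos]; nlinarith [sq_nonneg M]
      _ = 2 * M ^ 2 * Real.log ((k : ℝ) + 1) / ((k : ℝ) + 1) := by ring
  calc a (k + 1) ≤ a 2 / (k : ℝ) +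
        (M ^ 2 / (k : ℝ)) * ∑ i ∈ Finset.Icc 2 k, (1 : ℝ) / (i : ℝ) := h1
    _ ≤ 2 * a 2 * Real.log ((k : ℝ) + 1) / ((k : ℝ) + 1)
        + 2 * M ^ 2 * Real.log ((k : ℝ) + 1) / ((k : ℝ) + 1) := add_le_add hterm1 hterm2
    _ = 2 * (a 2 + M ^ 2) * Real.log ((k : ℝ) + 1) / ((k : ℝ) + 1) := by ring
end

section
/- Let M > 0, p ∈ (1/2, 1), and let {a_k} be a sequence of non-negative reals satisfying a_{k+1} ≤ (1 − 1/k^p) a_k + M²/k^{2p} for all k ≥ 1. Then a_{k+1} ≤ 2 (a_2 + M²/(2 − 2p)) (k+1)^{1−2p} for all k ≥ 1. -/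
/-- Bernoulli-type inequality for negative exponents in `[-1,0]`. -/
lemma bern_neg {s q : ℝ} (hs0 : 0 ≤ s) (hs1 : s ≤ 1) (hq0 : 0 ≤ q) (hq1 : q ≤ 1) :
    1 - q * s ≤ (1 + s) ^ (-q) := by
  have h1s : (0:ℝ) < 1 + s := by linarith
  have h1 : (1 + s) ^ q ≤ 1 + q * s :=
    rpow_one_add_le_one_add_mul_self (by linarith) hq0 hq1
  have hpos : 0 < (1 + s) ^ q := Real.rpow_pos_of_pos h1s q
  rw [Real.rpow_neg h1s.le, ← one_div, le_div_iff₀ hpos]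
  have hqs : q * s ≤ 1 := by nlinarith
  nlinarith [mul_le_mul_of_nonneg_left h1 (by linarith : 0 ≤ 1 - q * s), sq_nonneg (q * s), mul_nonneg hq0 hs0]

/-- Recursive estimate for the case `p ∈ (1/2, 1)`: if
`a_{k+1} ≤ (1 − 1/k^p) a_k + M²/k^{2p}` for all `k ≥ 1`, then
`a_{k+1} ≤ 2 (a_2 + M²/(2 − 2p)) (k+1)^{1−2p}` for all `k ≥ 1`. -/
theorem rate_estimate_p_between (M : ℝ) (hM : 0 < M) (p : ℝ)
    (hp : 1 / 2 < p ∧ p < 1) (a : ℕ → ℝ)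
    (ha_nonneg : ∀ k, 0 ≤ a k)
    (hrec : ∀ k ≥ 1, a (k + 1) ≤ (1 - 1 / (k : ℝ) ^ p) * a k + M ^ 2 / (k : ℝ) ^ (2 * p)) :
    ∀ k ≥ 1, a (k + 1) ≤ 2 * (a 2 + M ^ 2 / (2 - 2 * p)) * ((k : ℝ) + 1) ^ (1 - 2 * p) := by
  obtain ⟨hp1, hp2⟩ := hp
  set C := 2 * (a 2 + M ^ 2 / (2 - 2 * p)) with hC
  have h2p : (0:ℝ) < 2 - 2 * p := by linarith
  have hM2 : 0 ≤ M ^ 2 / (2 - 2 * p) := div_nonneg (sq_nonneg M) h2p.le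
  have ha2 := ha_nonneg 2
  have hC0 : 0 ≤ C := by rw [hC]; linarith
  have hCkey : M ^ 2 + C * (2 * p - 1) ≤ C := by
    have h : C * (2 - 2 * p) = 2 * a 2 * (2 - 2 * p) + 2 * M ^ 2 := by
      rw [hC]
      have hd : M ^ 2 / (2 - 2 * p) * (2 - 2 * p) = M ^ 2 := div_mul_cancel₀ _ h2p.ne'
      linear_combination 2 * hd
    nlinarith
  intro k hk
  induction k, hk using Nat.le_induction with
  | base =>
    have hb : (2:ℝ) ^ (-1:ℝ) ≤ (2:ℝ) ^ (1 - 2 * p) :=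
      Real.rpow_le_rpow_of_exponent_le one_le_two (by linarith)
    have hb2 : (2:ℝ) ^ (-1:ℝ) = 1 / 2 := by
      rw [Real.rpow_neg_one]; norm_num
    have h12 : ((1:ℕ):ℝ) + 1 = 2 := by norm_num
    rw [h12]
    calc a 2 ≤ C * (1 / 2) := by rw [hC]; linarith
    _ ≤ C * (2:ℝ) ^ (1 - 2 * p) := mul_le_mul_of_nonneg_left (hb2 ▸ hb) hC0
  | succ n hn ih =>
    have hx0 : (0:ℝ) < (n:ℝ) + 1 := by positivity
    have hx1 : (1:ℝ) ≤ (n:ℝ) + 1 := by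
      have : (1:ℝ) ≤ (n:ℝ) := by exact_mod_cast hn
      linarith
    set x : ℝ := (n:ℝ) + 1 with hxdef
    have hcast : ((n + 1 : ℕ) : ℝ) = x := by push_cast [hxdef]; ring
    have hrec' := hrec (n + 1) (by omega)
    rw [hcast] at hrec'
    -- coefficient nonneg
    have hxp : (1:ℝ) ≤ x ^ p := Real.one_le_rpow hx1 (by linarith)
    have hcoef : 0 ≤ 1 - 1 / x ^ p := by
      have : 1 / x ^ p ≤ 1 := by
        rw [div_le_one (by positivity)]; exact hxp
      linarith
    -- step 1: use ih
    have step1 : a (n + 1 + 1) ≤ (1 - 1 / x ^ p) * (C * x ^ (1 - 2 * p))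
        + M ^ 2 / x ^ (2 * p) := by
      refine hrec'.trans ?_
      gcongr
    -- Bernoulli lower bound for (x+1)^(1-2p)
    have hs0 : 0 ≤ 1 / x := by positivity
    have hs1 : 1 / x ≤ 1 := by rw [div_le_one hx0]; exact hx1
    have hq0 : (0:ℝ) ≤ 2 * p - 1 := by linarith
    have hq1 : (2:ℝ) * p - 1 ≤ 1 := by linarith
    have hbern : 1 - (2 * p - 1) * (1 / x) ≤ (1 + 1 / x) ^ (-(2 * p - 1)) :=
      bern_neg hs0 hs1 hq0 hq1
    have hxplus : x + 1 = x * (1 + 1 / x) := by field_simp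
    have hsplit : (x + 1) ^ (1 - 2 * p)
        = x ^ (1 - 2 * p) * (1 + 1 / x) ^ (1 - 2 * p) := by
      rw [hxplus, Real.mul_rpow hx0.le (by positivity)]
    have hneg : (1:ℝ) - 2 * p = -(2 * p - 1) := by ring
    have hlow : x ^ (1 - 2 * p) * (1 - (2 * p - 1) / x) ≤ (x + 1) ^ (1 - 2 * p) := by
      rw [hsplit, hneg]
      have hxpow : 0 ≤ x ^ (-(2 * p - 1)) := (Real.rpow_pos_of_pos hx0 _).le
      have := mul_le_mul_of_nonneg_left hbern
        (le_of_lt (Real.rpow_pos_of_pos hx0 (-(2 * p - 1))))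
      calc x ^ (-(2 * p - 1)) * (1 - (2 * p - 1) / x)
          = x ^ (-(2 * p - 1)) * (1 - (2 * p - 1) * (1 / x)) := by ring
        _ ≤ x ^ (-(2 * p - 1)) * (1 + 1 / x) ^ (-(2 * p - 1)) := this
    -- rpow identities
    have e1 : x ^ (1 - 2 * p) / x ^ p = x ^ (1 - p) * x ^ (-(2 * p)) := by
      rw [← Real.rpow_add hx0, ← Real.rpow_sub hx0]; ring_nf
    have e2' : x ^ (1 - 2 * p) = x ^ (-(2 * p)) * x := by
      rw [show (1 - 2 * p) = -(2 * p) + 1 by ring, Real.rpow_add hx0, Real.rpow_one]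
    have e2 : x ^ (1 - 2 * p) / x = x ^ (-(2 * p)) := by
      rw [e2', mul_div_assoc, div_self hx0.ne', mul_one]
    have e3 : (1:ℝ) / x ^ (2 * p) = x ^ (-(2 * p)) := by
      rw [Real.rpow_neg hx0.le, one_div]
    have hx2p : 0 < x ^ (-(2 * p)) := Real.rpow_pos_of_pos hx0 _
    have hx1p : (1:ℝ) ≤ x ^ (1 - p) := Real.one_le_rpow hx1 (by linarith)
    -- final chain
    have step2 : (1 - 1 / x ^ p) * (C * x ^ (1 - 2 * p)) + M ^ 2 / x ^ (2 * p)
        ≤ C * (x ^ (1 - 2 * p) * (1 - (2 * p - 1) / x)) := by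
      have lhs_eq : (1 - 1 / x ^ p) * (C * x ^ (1 - 2 * p)) + M ^ 2 / x ^ (2 * p)
          = C * x ^ (1 - 2 * p) - C * (x ^ (1 - 2 * p) / x ^ p)
            + M ^ 2 * (1 / x ^ (2 * p)) := by ring
      have rhs_eq : C * (x ^ (1 - 2 * p) * (1 - (2 * p - 1) / x))
          = C * x ^ (1 - 2 * p) - C * (2 * p - 1) * (x ^ (1 - 2 * p) / x) := by ring
      rw [lhs_eq, rhs_eq, e1, e2, e3]
      have key : M ^ 2 + C * (2 * p - 1) ≤ C * x ^ (1 - p) := by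
        calc M ^ 2 + C * (2 * p - 1) ≤ C := hCkey
        _ = C * 1 := by ring
        _ ≤ C * x ^ (1 - p) := by gcongr
      linarith [mul_le_mul_of_nonneg_right key hx2p.le]
    have hfin : a (n + 1 + 1) ≤ C * (x + 1) ^ (1 - 2 * p) :=
      step1.trans (step2.trans (by
        have := mul_le_mul_of_nonneg_left hlow hC0
        linarith))
    rw [hcast]
    exact hfin
end

section
/- Let p ∈ (0, 1/2] and define the sequence {u_k} by u_2 = 1/2^p and u_k = ((k^p − 1)/(k−1)^p) u_{k−1} + 1/k^p for k ≥ 3. Then u_k > 1 for all k ≥ 4 and lim_{k→∞} u_k = 1. -/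
open Real Filter

/-- One-step lemma: positivity propagates. -/
lemma aux_step_gt {p x v : ℝ} (hp0 : 0 < p) (hx : 3 ≤ x) (hv : 1 < v) :
    1 < (x ^ p - 1) / (x - 1) ^ p * v + 1 / x ^ p := by
  have hx1 : (0:ℝ) < x - 1 := by linarith
  have hA1 : 1 < x ^ p :=
    (Real.one_lt_rpow_iff_of_pos (by linarith)).2 (Or.inl ⟨by linarith, hp0⟩)
  have hC0 : 0 < (x - 1) ^ p := Real.rpow_pos_of_pos hx1 p
  have hA0 : (0:ℝ) < x ^ p := by linarith
  have hCA : (x - 1) ^ p < x ^ p := Real.rpow_lt_rpow (by linarith) (by linarith) hp0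
  set A := x ^ p
  set C := (x - 1) ^ p
  have h1 : (A - 1) / C ≤ (A - 1) / C * v :=
    le_mul_of_one_le_right (div_nonneg (by linarith) hC0.le) hv.le
  have h2 : 1 < (A - 1) / C + 1 / A := by
    rw [div_add_div _ _ (ne_of_gt hC0) (ne_of_gt hA0), lt_div_iff₀ (by positivity)]
    nlinarith [mul_pos (sub_pos.2 hA1) (sub_pos.2 hCA)]
  linarith

set_option maxHeartbeats 1000000 in
/-- One-step decay lemma. -/
lemma aux_step_decay {p x v B : ℝ} (hp0 : 0 < p) (hp2 : p ≤ 1 / 2) (hx : 9 ≤ x)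
    (hB : 4 ≤ B) (hv1 : 1 ≤ v) (hvB : v - 1 ≤ B * (x - 1) ^ (p - 1)) :
    (x ^ p - 1) / (x - 1) ^ p * v + 1 / x ^ p - 1 ≤ B * x ^ (p - 1) := by
  have hx1 : (0:ℝ) < x - 1 := by linarith
  have hx0 : (0:ℝ) < x := by linarith
  have hp1 : p ≤ 1 := by linarith
  have hA1 : 1 < x ^ p :=
    (Real.one_lt_rpow_iff_of_pos (by linarith)).2 (Or.inl ⟨by linarith, hp0⟩)
  have hC1 : 1 ≤ (x - 1) ^ p := Real.one_le_rpow (by linarith) hp0.le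
  have hC0 : (0:ℝ) < (x - 1) ^ p := by linarith
  have hA0 : (0:ℝ) < x ^ p := by linarith
  have hCA : (x - 1) ^ p ≤ x ^ p := Real.rpow_le_rpow (by linarith) (by linarith) hp0.le
  have hbern : x ^ p * (x - 1) ≤ (x - 1) ^ p * ((x - 1) + p) := by
    have h1 : x ^ p = ((x - 1) * (1 + 1 / (x - 1))) ^ p := by
      congr 1; field_simp; ring
    have h2 : (1 + 1 / (x - 1)) ^ p ≤ 1 + p * (1 / (x - 1)) :=
      rpow_one_add_le_one_add_mul_self ((by norm_num : (-1:ℝ) ≤ 0).trans (one_div_pos.mpr hx1).le) hp0.le hp1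
    have h3 : (1 + p * (1 / (x - 1))) * (x - 1) = (x - 1) + p := by field_simp
    rw [h1, Real.mul_rpow hx1.le (by positivity)]
    calc (x - 1) ^ p * (1 + 1 / (x - 1)) ^ p * (x - 1)
        ≤ (x - 1) ^ p * (1 + p * (1 / (x - 1))) * (x - 1) := by
          exact mul_le_mul_of_nonneg_right (mul_le_mul_of_nonneg_left h2 hC0.le) hx1.le
      _ = (x - 1) ^ p * ((x - 1) + p) := by rw [mul_assoc, h3]
  set A := x ^ p with hAdef
  set C := (x - 1) ^ p with hCdef
  have hAsq : A * A ≤ x := by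
    have e : A * A = x ^ (p + p) := (Real.rpow_add hx0 p p).symm
    rw [e]
    calc x ^ (p + p) ≤ x ^ (1:ℝ) :=
          Real.rpow_le_rpow_of_exponent_le (by linarith) (by linarith)
      _ = x := Real.rpow_one x
  have hAx1 : A ≤ x - 1 := by nlinarith [hAsq, hx, sq_nonneg (A - 3)]
  have hsub : (A - C) * (x - 1) ≤ p * C := by linarith [hbern]
  have h3a : 2 * A * p ≤ x - 1 := by
    have := mul_nonneg hA0.le (by linarith : (0:ℝ) ≤ 1 - 2 * p)
    linarith [hAx1]
  have h3 : 2 * A * p * C ≤ (x - 1) * C := mul_le_mul_of_nonneg_right h3a hC0.le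
  have h4 : 2 * A * ((A - C) * (x - 1)) ≤ 2 * A * (p * C) :=
    mul_le_mul_of_nonneg_left hsub (by positivity)
  have t : (2 * A * (A - C)) * (x - 1) ≤ C * (x - 1) := by linarith [h4, h3]
  have h5 : 2 * A * (A - C) ≤ C := le_of_mul_le_mul_right t hx1
  have key1 : (A - 1) / C ≤ (2 * A - 1) / (2 * A) := by
    rw [div_le_div_iff₀ hC0 (by positivity)]
    linarith [h5, hCA]
  have hsplit : (A - 1) / C * v + 1 / A - 1
      = (A - 1) / C * (v - 1) + (A - 1) * (A - C) / (C * A) := by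
    field_simp; ring
  have heps : (A - 1) * (A - C) / (C * A) ≤ p / (x - 1) := by
    rw [div_le_div_iff₀ (by positivity) hx1]
    have hint1 := mul_le_mul_of_nonneg_left hsub (by linarith : (0:ℝ) ≤ A - 1)
    have hint2 := mul_pos hp0 hC0
    nlinarith [hint1, hint2]
  have hvB' : v - 1 ≤ B * (C / (x - 1)) := by
    have e : (x - 1) ^ (p - 1) = C / (x - 1) := by
      rw [Real.rpow_sub hx1, Real.rpow_one, ← hCdef]
    rwa [e] at hvB
  have hmain : (A - 1) / C * (v - 1) ≤ (2 * A - 1) / (2 * A) * (B * (C / (x - 1))) := by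
    apply mul_le_mul key1 hvB' (by linarith) (div_nonneg (by linarith) (by positivity))
  have hBA : 2 * A * B + 2 * p * x ≤ B * x := by
    have hA38 : A ≤ 3 * x / 8 := by nlinarith [hAsq, hx, sq_nonneg (A - 3)]
    have hint1 := mul_le_mul_of_nonneg_right hA38 (by linarith : (0:ℝ) ≤ B)
    have hint2 := mul_le_mul_of_nonneg_right hp2 hx0.le
    have hint3 := mul_nonneg (by linarith : (0:ℝ) ≤ B - 4) hx0.le
    linarith [hint1, hint2, hint3]
  have hfinal : (2 * A - 1) / (2 * A) * (B * (C / (x - 1))) + p / (x - 1) ≤ B * (A / x) := by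
    have lhs_eq : (2 * A - 1) / (2 * A) * (B * (C / (x - 1))) + p / (x - 1)
        = ((2 * A - 1) * B * C + 2 * A * p) / (2 * A * (x - 1)) := by
      field_simp
    rw [lhs_eq, show B * (A / x) = B * A / x from (mul_div_assoc B A x).symm,
      div_le_div_iff₀ (by positivity) hx0]
    have hint1 := mul_le_mul_of_nonneg_left hBA hA0.le
    have hint2 := mul_le_mul_of_nonneg_left hCA
      (mul_nonneg (mul_nonneg (by linarith : (0:ℝ) ≤ 2 * A - 1) (by linarith : (0:ℝ) ≤ B)) hx0.le)
    linarith [hint1, hint2]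
  have hrwx : x ^ (p - 1) = A / x := by
    rw [Real.rpow_sub hx0, Real.rpow_one, ← hAdef]
  rw [hsplit, hrwx]
  calc (A - 1) / C * (v - 1) + (A - 1) * (A - C) / (C * A)
      ≤ (2 * A - 1) / (2 * A) * (B * (C / (x - 1))) + p / (x - 1) := add_le_add hmain heps
    _ ≤ B * (A / x) := hfinal

set_option maxHeartbeats 1000000 in
/-- For `p ∈ (0, 1/2]`, the auxiliary sequence `u_k` defined by `u_2 = 2^{−p}`
and `u_k = ((k^p − 1)/(k−1)^p) u_{k−1} + k^{−p}` satisfies `u_k > 1` for all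
`k ≥ 4` and `u_k → 1`. -/
theorem aux_sequence_tendsto_one (p : ℝ) (hp : 0 < p ∧ p ≤ 1 / 2)
    (u : ℕ → ℝ)
    (hu2 : u 2 = 1 / (2 : ℝ) ^ p)
    (hurec : ∀ k ≥ 3, u k = (((k : ℝ) ^ p - 1) / ((k : ℝ) - 1) ^ p) * u (k - 1) + 1 / (k : ℝ) ^ p) :
    (∀ k ≥ 4, 1 < u k) ∧ Filter.Tendsto u Filter.atTop (nhds 1) := by
  obtain ⟨hp0, hp2⟩ := hp
  have h3 := hurec 3 (le_refl 3)
  have h4 := hurec 4 (by norm_num)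
  norm_num at h3 h4
  have ha : (1:ℝ) < 2 ^ p :=
    (Real.one_lt_rpow_iff_of_pos (by norm_num)).2 (Or.inl ⟨by norm_num, hp0⟩)
  have hb : (1:ℝ) < 3 ^ p :=
    (Real.one_lt_rpow_iff_of_pos (by norm_num)).2 (Or.inl ⟨by norm_num, hp0⟩)
  have hbc : (3:ℝ) ^ p < 4 ^ p := Real.rpow_lt_rpow (by norm_num) (by norm_num) hp0
  have hc : (4:ℝ) ^ p = 2 ^ p * 2 ^ p := by
    rw [← Real.mul_rpow (by norm_num) (by norm_num)]; norm_num
  have hu4 : 1 < u 4 := by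
    rw [h4, h3, hu2, hc]
    set a := (2:ℝ) ^ p with hadef
    set b := (3:ℝ) ^ p with hbdef
    rw [hc] at hbc
    have ha0 : (0:ℝ) < a := by linarith
    have hb0 : (0:ℝ) < b := by linarith
    have key : (0:ℝ) < (a * a - 1) * (a * a - b) :=
      mul_pos (by nlinarith) (by linarith)
    have expand : (a * a - 1) / b * ((b - 1) / a * (1 / a) + b⁻¹) + (a * a)⁻¹ - 1
        = (a * a - 1) * (a * a - b) / (a * a * b * b) := by
      field_simp; ring
    have hpos : 0 < (a * a - 1) * (a * a - b) / (a * a * b * b) :=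
      div_pos key (by positivity)
    linarith [expand, hpos]
  have part1 : ∀ k, 4 ≤ k → 1 < u k := by
    intro k hk
    induction k, hk using Nat.le_induction with
    | base => exact hu4
    | succ n hn ih =>
      have hrec := hurec (n + 1) (by omega)
      rw [Nat.add_sub_cancel] at hrec
      push_cast at hrec
      rw [show (n:ℝ) + 1 - 1 = (n:ℝ) from by ring] at hrec
      rw [hrec]
      have hn3 : (3:ℝ) ≤ (n:ℝ) + 1 := by
        have : (4:ℝ) ≤ (n:ℝ) := by exact_mod_cast hn
        linarith
      have := aux_step_gt hp0 hn3 ih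
      rw [show ((n:ℝ) + 1) - 1 = (n:ℝ) from by ring] at this
      linarith [this]
  set B := max 4 ((u 8 - 1) * 8) with hBdef
  have hB4 : (4:ℝ) ≤ B := le_max_left _ _
  have hB0 : (0:ℝ) ≤ B := by linarith
  have part2 : ∀ k, 8 ≤ k → u k - 1 ≤ B * (k:ℝ) ^ (p - 1) := by
    intro k hk
    induction k, hk using Nat.le_induction with
    | base =>
      have h8 : (0:ℝ) ≤ u 8 - 1 := by linarith [part1 8 (by norm_num)]
      have hle : u 8 - 1 ≤ B / 8 := by
        have h := le_max_right (4:ℝ) ((u 8 - 1) * 8)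
        rw [← hBdef] at h
        linarith
      have h8p : (8:ℝ) ^ (-1:ℝ) ≤ (8:ℝ) ^ (p - 1) :=
        Real.rpow_le_rpow_of_exponent_le (by norm_num) (by linarith)
      rw [Real.rpow_neg_one] at h8p
      have hfin : B / 8 ≤ B * (8:ℝ) ^ (p - 1) := by
        calc B / 8 = B * (8:ℝ)⁻¹ := by ring
          _ ≤ B * (8:ℝ) ^ (p - 1) := mul_le_mul_of_nonneg_left h8p hB0
      push_cast
      linarith
    | succ n hn ih =>
      have hn4 : 1 ≤ u n := (part1 n (by omega)).le
      have hrec := hurec (n + 1) (by omega)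
      rw [Nat.add_sub_cancel] at hrec
      push_cast at hrec ⊢
      rw [show (n:ℝ) + 1 - 1 = (n:ℝ) from by ring] at hrec
      have hx9 : (9:ℝ) ≤ (n:ℝ) + 1 := by
        have : (8:ℝ) ≤ (n:ℝ) := by exact_mod_cast hn
        linarith
      have ih' : u n - 1 ≤ B * (((n:ℝ) + 1) - 1) ^ (p - 1) := by
        rw [show ((n:ℝ) + 1) - 1 = (n:ℝ) from by ring]; exact ih
      have hstep := aux_step_decay hp0 hp2 hx9 hB4 hn4 ih'
      rw [show ((n:ℝ) + 1) - 1 = (n:ℝ) from by ring] at hstep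
      rw [hrec]
      linarith [hstep]
  have hlim : Tendsto (fun k : ℕ => B * (k:ℝ) ^ (p - 1)) atTop (nhds 0) := by
    have h1 : Tendsto (fun x : ℝ => x ^ (p - 1)) atTop (nhds 0) := by
      have := tendsto_rpow_neg_atTop (y := 1 - p) (by linarith)
      simpa [show -(1 - p) = p - 1 from by ring] using this
    have h2 : Tendsto (fun k : ℕ => ((k:ℝ)) ^ (p - 1)) atTop (nhds 0) :=
      h1.comp tendsto_natCast_atTop_atTop
    simpa using h2.const_mul B
  have hsub : Tendsto (fun k => u k - 1) atTop (nhds 0) := by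
    apply tendsto_of_tendsto_of_tendsto_of_le_of_le' tendsto_const_nhds hlim
    · filter_upwards [eventually_ge_atTop 4] with k hk
      linarith [part1 k hk]
    · filter_upwards [eventually_ge_atTop 8] with k hk
      exact part2 k hk
  refine ⟨part1, ?_⟩
  have := hsub.add_const 1
  simpa using this
end

section
/- For every p ∈ (0, 1/2] and every integer k ≥ 4, it holds that 1 − ((k+1)^p − 1)/k^p > 1/(k+1)^{2p}. -/
open Real

set_option maxHeartbeats 1600000 in
/-- For every `p ∈ (0, 1/2]` and every integer `k ≥ 4`,
`1 − ((k+1)^p − 1)/k^p > 1/(k+1)^{2p}`. -/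
theorem eta_lower_bound (p : ℝ) (hp : 0 < p) (hp' : p ≤ 1 / 2)
    (k : ℕ) (hk : 4 ≤ k) :
    1 / ((k : ℝ) + 1) ^ (2 * p) < 1 - (((k : ℝ) + 1) ^ p - 1) / (k : ℝ) ^ p := by
  have hk4 : (4 : ℝ) ≤ (k : ℝ) := by exact_mod_cast hk
  have hk0 : (0 : ℝ) < (k : ℝ) := by linarith
  have hk1 : (1 : ℝ) ≤ (k : ℝ) := by linarith
  set A : ℝ := (k : ℝ) ^ p with hA
  set B : ℝ := ((k : ℝ) + 1) ^ p with hB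
  have hApos : 0 < A := rpow_pos_of_pos hk0 p
  have hBpos : 0 < B := rpow_pos_of_pos (by linarith) p
  have hA1 : 1 ≤ A := Real.one_le_rpow hk1 hp.le
  -- A² = k^(2p)
  have hAsq : A ^ 2 = (k : ℝ) ^ (2 * p) := by
    rw [hA, ← Real.rpow_natCast (_ ^ p) 2, ← Real.rpow_mul hk0.le]
    norm_num [mul_comm]
  have hBsq : B ^ 2 = ((k : ℝ) + 1) ^ (2 * p) := by
    rw [hB, ← Real.rpow_natCast (_ ^ p) 2, ← Real.rpow_mul (by linarith : (0:ℝ) ≤ (k:ℝ)+1)]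
    norm_num [mul_comm]
  -- k^(2p) ≤ k
  have hA2k : A ^ 2 ≤ (k : ℝ) := by
    rw [hAsq]
    calc (k : ℝ) ^ (2 * p) ≤ (k : ℝ) ^ (1 : ℝ) :=
          Real.rpow_le_rpow_of_exponent_le hk1 (by linarith)
      _ = (k : ℝ) := Real.rpow_one _
  -- Bernoulli: (1 + 1/k)^p ≤ 1 + p/k
  have hbern : ((1 : ℝ) + 1 / k) ^ p ≤ 1 + p * (1 / k) :=
    rpow_one_add_le_one_add_mul_self (by have := one_div_pos.mpr hk0; linarith) hp.le (by linarith)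
  -- B = A * (1 + 1/k)^p
  have hBA : B = A * ((1 : ℝ) + 1 / k) ^ p := by
    rw [hA, hB, ← Real.mul_rpow hk0.le (by positivity)]
    congr 1
    field_simp
  -- A * B ≤ A² + p
  have hAB : A * B ≤ A ^ 2 + p := by
    have h1 : A * B ≤ A ^ 2 * (1 + p * (1 / k)) := by
      rw [hBA, ← mul_assoc, ← sq]
      exact mul_le_mul_of_nonneg_left hbern (by positivity)
    have h2 : A ^ 2 * (1 + p * (1 / k)) = A ^ 2 + p * (A ^ 2 / k) := by ring
    have h3 : A ^ 2 / k ≤ 1 := (div_le_one hk0).mpr hA2k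
    nlinarith [hp.le]
  -- 1 + p < A  (since A ≥ 4^p ≥ 1 + p log 4 > 1 + p)
  have h4p : (1 : ℝ) + p < A := by
    have h4 : (4 : ℝ) ^ p ≤ A := Real.rpow_le_rpow (by norm_num) hk4 hp.le
    have hlog : (1 : ℝ) < Real.log 4 := by
      rw [← Real.exp_lt_exp (x := 1), Real.exp_log (by norm_num)]
      linarith [Real.exp_one_lt_d9]
    have hexp : p * Real.log 4 + 1 ≤ Real.exp (p * Real.log 4) :=
      Real.add_one_le_exp _
    have h4e : (4 : ℝ) ^ p = Real.exp (p * Real.log 4) := by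
      rw [Real.rpow_def_of_pos (by norm_num), mul_comm]
    nlinarith
  -- key: 1 < A * (1 + A - B)
  have hkey : 1 < A * (1 + A - B) := by nlinarith
  have hpos : 0 < 1 + A - B := by nlinarith
  have hBA2 : A ^ 2 ≤ B ^ 2 := by
    have : A ≤ B := Real.rpow_le_rpow hk0.le (by linarith) hp.le
    nlinarith
  have hmain : A < B ^ 2 * (1 + A - B) := by nlinarith
  have hrw : 1 - (B - 1) / A = (A - B + 1) / A := by
    field_simp
    ring
  rw [← hBsq, hrw, div_lt_div_iff₀ (by positivity) hApos]
  ring_nf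
  ring_nf at hmain
  linarith
end

section
/- Let K = [−1, 1] ⊂ ℝ, let F(x) = 2·sign(x)·√|x|, let λ ∈ (0, 1), and let x_1 ∈ (0, λ²). Define x_{k+1} = pr_K(x_k − λ F(x_k)) for k ≥ 1. Then for every k ≥ 0, 0 < x_{2k+1} < x_{2k+3} < λ²; in particular the subsequence {x_{2k+1}} is increasing and positive, so the sequence {x_k} does not converge to 0 (the unique solution of VI(K, F)). -/
lemma gpm_step_aux_s15 (lam a : ℝ) (h0 : 0 < lam) (h1 : lam < 1)
    (ha : 0 < a) (ha' : a < lam ^ 2) :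
    -1 < a - 2 * lam * Real.sqrt a ∧ a - 2 * lam * Real.sqrt a < 0 ∧
    a < (a - 2 * lam * Real.sqrt a) + 2 * lam * Real.sqrt (-(a - 2 * lam * Real.sqrt a)) ∧
    (a - 2 * lam * Real.sqrt a) + 2 * lam * Real.sqrt (-(a - 2 * lam * Real.sqrt a)) < lam ^ 2 := by
  set t := Real.sqrt a with ht
  have ht2 : t ^ 2 = a := Real.sq_sqrt ha.le
  have htpos : 0 < t := Real.sqrt_pos.mpr ha
  have htlam : t < lam := by
    nlinarith [ht2, htpos]
  have hb : a - 2 * lam * t = t ^ 2 - 2 * lam * t := by rw [ht2]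
  have hbneg : a - 2 * lam * t < 0 := by nlinarith
  have hbgt : -(lam ^ 2) < a - 2 * lam * t := by nlinarith [sq_nonneg (t - lam)]
  have hbgt1 : -1 < a - 2 * lam * t := by nlinarith
  refine ⟨hbgt1, hbneg, ?_, ?_⟩ <;>
  · set s := Real.sqrt (-(a - 2 * lam * t)) with hs
    have hs2 : s ^ 2 = -(a - 2 * lam * t) := Real.sq_sqrt (by linarith)
    have hsnn : 0 ≤ s := Real.sqrt_nonneg _
    have hst : t < s := by nlinarith
    have hslam : s < lam := by nlinarith [sq_nonneg (lam - t)]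
    nlinarith [sq_nonneg (lam - s), sq_nonneg (s - t)]

/-- For `K = [−1,1]`, `F(x) = 2·sign(x)·√|x|`, constant stepsize `λ ∈ (0,1)` and
`x_1 ∈ (0, λ²)`, the gradient projection iterates satisfy
`0 < x_{2k+1} < x_{2k+3} < λ²` for all `k ≥ 0`; in particular the sequence does
not converge to `0`, the unique solution of `VI(K, F)`. -/
theorem gpm_constant_stepsize_fails
    (F : ℝ → ℝ)
    (hF : ∀ x : ℝ, F x = if 0 ≤ x then 2 * Real.sqrt x else -(2 * Real.sqrt (-x)))
    (lam : ℝ) (hlam : 0 < lam ∧ lam < 1)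
    (x : ℕ → ℝ) (hx1 : 0 < x 1 ∧ x 1 < lam ^ 2)
    (hrec : ∀ k ≥ 1, x (k + 1) = max (-1) (min 1 (x k - lam * F (x k)))) :
    (∀ k : ℕ, 0 < x (2 * k + 1) ∧ x (2 * k + 1) < x (2 * k + 3) ∧ x (2 * k + 3) < lam ^ 2) ∧
    ¬ Filter.Tendsto x Filter.atTop (nhds 0) := by
  obtain ⟨hl0, hl1⟩ := hlam
  have hlamsq : lam ^ 2 < 1 := by nlinarith
  -- two-step lemma
  have two_step : ∀ n : ℕ, 1 ≤ n → 0 < x n → x n < lam ^ 2 →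
      x n < x (n + 2) ∧ x (n + 2) < lam ^ 2 := by
    intro n hn hp hq
    obtain ⟨hbgt1, hbneg, hac, hclt⟩ := gpm_step_aux_s15 lam (x n) hl0 hl1 hp hq
    have hFn : F (x n) = 2 * Real.sqrt (x n) := by rw [hF]; simp [hp.le]
    have hxn1 : x (n + 1) = x n - 2 * lam * Real.sqrt (x n) := by
      rw [hrec n hn, hFn]
      have h1 : x n - lam * (2 * Real.sqrt (x n)) = x n - 2 * lam * Real.sqrt (x n) := by ring
      rw [h1, min_eq_right (by linarith), max_eq_right (by linarith)]
    have hFn1 : F (x (n + 1)) = -(2 * Real.sqrt (-(x (n + 1)))) := by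
      rw [hF]; rw [if_neg (by rw [hxn1]; linarith)]
    have hxn2 : x (n + 2) = (x n - 2 * lam * Real.sqrt (x n))
        + 2 * lam * Real.sqrt (-(x n - 2 * lam * Real.sqrt (x n))) := by
      have := hrec (n + 1) (by omega)
      rw [this, hFn1, hxn1]
      have h1 : x n - 2 * lam * Real.sqrt (x n) - lam * -(2 * Real.sqrt (-(x n - 2 * lam * Real.sqrt (x n))))
          = (x n - 2 * lam * Real.sqrt (x n)) + 2 * lam * Real.sqrt (-(x n - 2 * lam * Real.sqrt (x n))) := by
        ring
      rw [h1, min_eq_right (by linarith), max_eq_right (by linarith)]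
    rw [hxn2]
    exact ⟨hac, hclt⟩
  have main : ∀ k : ℕ, 0 < x (2 * k + 1) ∧ x (2 * k + 1) < lam ^ 2 := by
    intro k
    induction k with
    | zero => simpa using hx1
    | succ m ih =>
      obtain ⟨h1, h2⟩ := ih
      obtain ⟨ha, hb⟩ := two_step (2 * m + 1) (by omega) h1 h2
      have : 2 * (m + 1) + 1 = 2 * m + 1 + 2 := by omega
      rw [this]
      exact ⟨by linarith, hb⟩
  have key : ∀ k : ℕ, 0 < x (2 * k + 1) ∧ x (2 * k + 1) < x (2 * k + 3) ∧ x (2 * k + 3) < lam ^ 2 := by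
    intro k
    obtain ⟨h1, h2⟩ := main k
    obtain ⟨ha, hb⟩ := two_step (2 * k + 1) (by omega) h1 h2
    have : 2 * k + 3 = 2 * k + 1 + 2 := by omega
    rw [this]
    exact ⟨h1, ha, hb⟩
  refine ⟨key, ?_⟩
  have lower : ∀ k : ℕ, x 1 ≤ x (2 * k + 1) := by
    intro k
    induction k with
    | zero => simp
    | succ m ih =>
      obtain ⟨_, h2, _⟩ := key m
      have : 2 * (m + 1) + 1 = 2 * m + 3 := by omega
      rw [this]; linarith
  intro htend
  have hcomp : Filter.Tendsto (fun k : ℕ => x (2 * k + 1)) Filter.atTop (nhds 0) := by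
    apply htend.comp
    apply Filter.tendsto_atTop_mono (fun k => by omega : ∀ k : ℕ, k ≤ 2 * k + 1)
    exact Filter.tendsto_id
  have hev : ∀ᶠ k in Filter.atTop, x (2 * k + 1) < x 1 :=
    hcomp.eventually (gt_mem_nhds hx1.1)
  obtain ⟨k, hk⟩ := hev.exists
  linarith [lower k]
end

section
/- Let F : ℝ → ℝ be defined by F(x) = 2^{|x|} x, and define the sequence {x_k} by x_1 = 2 and x_{k+1} = x_k (1 − 2^{|x_k|}/k) for k ≥ 1 (the gradient projection iteration on K = ℝ with stepsizes λ_k = 1/k). Then |x_k| ≥ 2k for all k ≥ 1; in particular {x_k} is unbounded and does not converge to the unique solution x* = 0 of VI(ℝ, F). -/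
/-- For `F(x) = 2^{|x|} x` on `ℝ` and the iteration `x_1 = 2`,
`x_{k+1} = x_k (1 − 2^{|x_k|}/k)` (gradient projection with stepsizes `1/k` on
`K = ℝ`), we have `|x_k| ≥ 2k` for all `k ≥ 1`; in particular the sequence is
unbounded and does not converge to the unique solution `x* = 0`. -/
theorem gpm_unbounded_domain_fails
    (F : ℝ → ℝ) (hF : ∀ x : ℝ, F x = (2 : ℝ) ^ |x| * x)
    (x : ℕ → ℝ) (hx1 : x 1 = 2)
    (hrec : ∀ k ≥ 1, x (k + 1) = x k * (1 - (2 : ℝ) ^ |x k| / (k : ℝ))) :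
    (∀ k : ℕ, 1 ≤ k → 2 * (k : ℝ) ≤ |x k|) ∧
    ¬ Bornology.IsBounded (Set.range x) ∧
    ¬ Filter.Tendsto x Filter.atTop (nhds 0) := by
  have key : ∀ k : ℕ, 1 ≤ k → 2 * (k : ℝ) ≤ |x k| := by
    intro k hk
    induction k with
    | zero => omega
    | succ n ih =>
      rcases Nat.eq_or_lt_of_le hk with h1 | h1
      · rw [← h1]; simp [hx1]
      · have hn : 1 ≤ n := by omega
        have ha : 2 * (n : ℝ) ≤ |x n| := ih hn
        set a := |x n| with hadef
        have hk0 : (0 : ℝ) < n := by exact_mod_cast hn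
        -- 2^(2n) ≥ 2n+1 over ℕ, cast to ℝ
        have hpN : 2 * n + 1 ≤ 2 ^ (2 * n) := Nat.lt_two_pow_self (n := 2 * n)
        have hp : (2 * (n : ℝ) + 1) ≤ (2 : ℝ) ^ (2 * n : ℕ) := by
          exact_mod_cast hpN
        -- 2^a ≥ 2^(2n)
        have hr : (2 : ℝ) ^ (2 * n : ℕ) ≤ (2 : ℝ) ^ a := by
          rw [← Real.rpow_natCast 2 (2 * n)]
          apply Real.rpow_le_rpow_of_exponent_le one_le_two
          push_cast
          exact ha
        have ht1 : (2 : ℝ) ≤ (2 : ℝ) ^ a / n := by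
          rw [le_div_iff₀ hk0]
          calc (2 : ℝ) * n ≤ 2 * n + 1 := by linarith
            _ ≤ (2 : ℝ) ^ (2 * n : ℕ) := hp
            _ ≤ (2 : ℝ) ^ a := hr
        have hxa : x (n + 1) = x n * (1 - (2 : ℝ) ^ a / n) := hrec n hn
        have habs : |x (n + 1)| = a * ((2 : ℝ) ^ a / n - 1) := by
          rw [hxa, abs_mul, hadef]
          congr 1
          rw [abs_of_nonpos (by linarith), neg_sub]
        rw [habs]
        have h1' : (1 : ℝ) ≤ (2 : ℝ) ^ a / n - 1 := by linarith
        have ha2 : (0 : ℝ) ≤ a := abs_nonneg _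
        have step : 2 * (n : ℝ) * ((2 : ℝ) ^ a / n - 1) ≤ a * ((2 : ℝ) ^ a / n - 1) :=
          mul_le_mul_of_nonneg_right ha (by linarith)
        have : 2 * ((n : ℝ) + 1) ≤ 2 * (n : ℝ) * ((2 : ℝ) ^ a / n - 1) := by
          have h2a : (2 * (n : ℝ) + 1) ≤ (2 : ℝ) ^ a := le_trans hp hr
          rw [mul_sub, mul_one]
          have : 2 * (n : ℝ) * ((2 : ℝ) ^ a / n) = 2 * (2 : ℝ) ^ a := by
            field_simp
          rw [this]
          linarith
        push_cast
        linarith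
  refine ⟨key, ?_, ?_⟩
  · intro hb
    rw [isBounded_iff_forall_norm_le] at hb
    obtain ⟨C, hC⟩ := hb
    set n : ℕ := ⌈C⌉₊ + 1
    have hn1 : 1 ≤ n := by omega
    have h1 := key n hn1
    have h2 : ‖x n‖ ≤ C := hC _ ⟨n, rfl⟩
    have h3 : C ≤ (⌈C⌉₊ : ℝ) := Nat.le_ceil C
    have h4 : (n : ℝ) = (⌈C⌉₊ : ℝ) + 1 := by push_cast [n]; ring
    rw [Real.norm_eq_abs] at h2
    have h5 : (0:ℝ) ≤ (⌈C⌉₊ : ℝ) := Nat.cast_nonneg _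
    nlinarith
  · intro h
    rw [Metric.tendsto_atTop] at h
    obtain ⟨N, hN⟩ := h 1 one_pos
    have h1 := hN (max N 1) (le_max_left _ _)
    have h2 := key (max N 1) (le_max_right _ _)
    rw [Real.dist_eq, sub_zero] at h1
    have : (1 : ℝ) ≤ (max N 1 : ℕ) := by exact_mod_cast le_max_right N 1
    linarith
end

section
/- Let K ⊂ ℝⁿ be a non-empty closed convex set, let F : K → ℝⁿ be continuous and strongly pseudomonotone with modulus γ > 0, let x* be the unique solution of VI(K, F), and let x ∈ K be arbitrary. Define K′ = K ∩ B̄(x, ‖F(x)‖/γ), the intersection of K with the closed ball of center x and radius ‖F(x)‖/γ. Then K′ is a non-empty closed bounded convex set containing x*, and x* is the unique solution of VI(K′, F), i.e., x* ∈ K′ and ⟨F(x*), y − x*⟩ ≥ 0 for all y ∈ K′, and any point of K′ with this property equals x*. -/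
open scoped RealInnerProductSpace

/-- Localization for the unbounded case: `K′ = K ∩ B̄(x, ‖F(x)‖/γ)` is a
non-empty closed bounded convex set containing the unique solution `x*` of
`VI(K, F)`, and `x*` is the unique solution of `VI(K′, F)`. -/
theorem localization_unbounded_case {n : ℕ} (K : Set (EuclideanSpace ℝ (Fin n)))
    (hKne : K.Nonempty) (hKcl : IsClosed K) (hKcv : Convex ℝ K)
    (F : EuclideanSpace ℝ (Fin n) → EuclideanSpace ℝ (Fin n))
    (hFcont : ContinuousOn F K)
    (γ : ℝ) (hγ : 0 < γ)
    (hSPM : ∀ x ∈ K, ∀ y ∈ K, 0 ≤ ⟪F y, x - y⟫ → γ * ‖x - y‖ ^ 2 ≤ ⟪F x, x - y⟫)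
    (xs : EuclideanSpace ℝ (Fin n)) (hxs_mem : xs ∈ K)
    (hxs_sol : ∀ y ∈ K, 0 ≤ ⟪F xs, y - xs⟫)
    (hxs_uniq : ∀ z ∈ K, (∀ y ∈ K, 0 ≤ ⟪F z, y - z⟫) → z = xs)
    (x : EuclideanSpace ℝ (Fin n)) (hx : x ∈ K)
    (K' : Set (EuclideanSpace ℝ (Fin n)))
    (hK' : K' = K ∩ Metric.closedBall x (‖F x‖ / γ)) :
    K'.Nonempty ∧ IsClosed K' ∧ Bornology.IsBounded K' ∧ Convex ℝ K' ∧
    xs ∈ K' ∧ (∀ y ∈ K', 0 ≤ ⟪F xs, y - xs⟫) ∧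
    (∀ z ∈ K', (∀ y ∈ K', 0 ≤ ⟪F z, y - z⟫) → z = xs) := by
  subst hK'
  have hr : 0 ≤ ‖F x‖ / γ := div_nonneg (norm_nonneg _) hγ.le
  have hxK' : x ∈ K ∩ Metric.closedBall x (‖F x‖ / γ) :=
    ⟨hx, by simpa using hr⟩
  -- xs ∈ K'
  have h1 : 0 ≤ ⟪F xs, x - xs⟫ := hxs_sol x hx
  have h2 : γ * ‖x - xs‖ ^ 2 ≤ ⟪F x, x - xs⟫ := hSPM x hx xs hxs_mem h1
  have h3 : ⟪F x, x - xs⟫ ≤ ‖F x‖ * ‖x - xs‖ := real_inner_le_norm _ _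
  have hdist : ‖x - xs‖ ≤ ‖F x‖ / γ := by
    rcases eq_or_lt_of_le (norm_nonneg (x - xs)) with h | h
    · rw [← h]; exact hr
    · rw [le_div_iff₀ hγ]
      have := le_trans h2 h3
      nlinarith [this]
  have hxsK' : xs ∈ K ∩ Metric.closedBall x (‖F x‖ / γ) := by
    refine ⟨hxs_mem, ?_⟩
    rw [Metric.mem_closedBall, dist_comm, dist_eq_norm]
    exact hdist
  refine ⟨⟨x, hxK'⟩, hKcl.inter Metric.isClosed_closedBall,
    (Metric.isBounded_closedBall).subset (Set.inter_subset_right),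
    hKcv.inter (convex_closedBall _ _), hxsK',
    fun y hy => hxs_sol y hy.1, ?_⟩
  intro z hz hzsol
  have ha : 0 ≤ ⟪F z, xs - z⟫ := hzsol xs hxsK'
  have hb : γ * ‖xs - z‖ ^ 2 ≤ ⟪F xs, xs - z⟫ := hSPM xs hxs_mem z hz.1 ha
  have hc : 0 ≤ ⟪F xs, z - xs⟫ := hxs_sol z hz.1
  have hd : ⟪F xs, xs - z⟫ = -⟪F xs, z - xs⟫ := by
    rw [← inner_neg_right, neg_sub]
  have : ‖xs - z‖ ^ 2 ≤ 0 := by nlinarith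
  have : xs - z = 0 := by
    have := sq_nonneg ‖xs - z‖
    have h0 : ‖xs - z‖ = 0 := by nlinarith
    exact norm_eq_zero.mp h0
  exact (sub_eq_zero.mp this).symm
end
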